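/- arXiv:0709.2644 — 9 statements merged into one kernel-verified Lean document; each statement's English description precedes it below -/
import Mathlib

section
/- Let m' ⊆ m be a Lie triple system, let a' be a Cartan subalgebra of m', and let a be a Cartan subalgebra of m with a' = a ∩ m'. Then: (a) every root α ∈ Δ(m',a') is of the form α = λ|_{a'} for some λ ∈ Δ(m,a) with λ|_{a'} ≠ 0, and for every α ∈ Δ(m',a') the root space of m' satisfies m'_α = (Σ_{λ ∈ Δ(m,a), λ|_{a'} = α} m_λ) ∩ m', the sum running over all roots λ of Δ(m,a) whose restriction to a' equals α. (b) If a' = a, then Δ(m',a') ⊆ Δ(m,a) and m'_α = m_α ∩ m' for every α ∈ Δ(m',a'). -/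
section

variable {L : Type} [LieRing L] [LieAlgebra ℝ L]

/-- A real subspace of a Lie algebra is *flat* if the Lie bracket vanishes on it. -/
def IsFlat (a : Submodule ℝ L) : Prop := ∀ x ∈ a, ∀ y ∈ a, ⁅x, y⁆ = 0

/-- `a` is a *Cartan subalgebra of `m`*: a flat subspace of `m` which is maximal among
flat subspaces of `m`. -/
def IsCartanSubalgebraIn (m a : Submodule ℝ L) : Prop :=
  a ≤ m ∧ IsFlat a ∧ ∀ b : Submodule ℝ L, b ≤ m → IsFlat b → a ≤ b → b = a

/-- `m'` is a *Lie triple system* contained in `m`. -/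
def IsLieTripleSystemIn (m m' : Submodule ℝ L) : Prop :=
  m' ≤ m ∧ ∀ x ∈ m', ∀ y ∈ m', ∀ z ∈ m', ⁅⁅x, y⁆, z⁆ ∈ m'

/-- The root space of `m` relative to the Cartan subalgebra `a`, for the linear form `lam`
on `a`:  `m_lam = {X ∈ m : ∀ Z ∈ a, ⁅Z,⁅Z,X⁆⁆ = -lam(Z)² • X}`. -/
def rootSpaceIn (m a : Submodule ℝ L) (lam : ↥a →ₗ[ℝ] ℝ) : Submodule ℝ L where
  carrier := {X | X ∈ m ∧ ∀ Z : ↥a, ⁅(Z : L), ⁅(Z : L), X⁆⁆ = (-((lam Z) ^ 2)) • X}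
  zero_mem' := ⟨m.zero_mem, fun Z => by simp⟩
  add_mem' := fun hX hY => ⟨m.add_mem hX.1 hY.1, fun Z => by
    rw [lie_add, lie_add, hX.2 Z, hY.2 Z, smul_add]⟩
  smul_mem' := fun c X hX => ⟨m.smul_mem c hX.1, fun Z => by
    rw [lie_smul, lie_smul, hX.2 Z, smul_comm]⟩

/-- The root system `Δ(m,a)`: all nonzero linear forms on `a` with nonzero root space. -/
def rootSystemIn (m a : Submodule ℝ L) : Set (↥a →ₗ[ℝ] ℝ) :=
  {lam | lam ≠ 0 ∧ rootSpaceIn m a lam ≠ ⊥}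

/-- Restriction of a linear form on `a` to a smaller subspace `a' ≤ a`. -/
def restrictForm {a' a : Submodule ℝ L} (h : a' ≤ a) (lam : ↥a →ₗ[ℝ] ℝ) :
    ↥a' →ₗ[ℝ] ℝ :=
  lam.comp (Submodule.inclusion h)

end

/-!
Simultaneously diagonalise the commuting family `(ad Z)²`, `Z ∈ a`, which is symmetric for the
inner product `-κ`, on the space of `X ∈ m` satisfying the root equation of `α` along `a'`.
On a joint eigenvector `X ≠ 0` with `(ad Z)² X = χ(Z) X`, polarisation and the flatness of `a`
give `ad Z ad Z₀ X = b(Z) X` with `b` linear and `b(Z)² = χ(Z) χ(Z₀)`; choosing `Z₀ ∈ a'` with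
`α(Z₀) = s ≠ 0` yields `χ = -λ²` for the linear form `λ = b / s`. Thus `X ∈ m_λ`, and since
`λ|a'² = α²` we get `λ|a' = ±α`; replacing `λ` by `-λ` if necessary, `λ|a' = α`.
-/

section RootSpaces

lemma lie_lie_comm_of_lie_eq_zero {L : Type*} [LieRing L] {Z W : L} (h : ⁅Z, W⁆ = 0) (X : L) :
    ⁅Z, ⁅W, X⁆⁆ = ⁅W, ⁅Z, X⁆⁆ := by
  rw [leibniz_lie, h, zero_lie, zero_add]

lemma LinearMap.eq_or_eq_neg_of_sq_eq_sq {R M : Type*} [CommRing R] [NoZeroDivisors R]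
    [AddCommGroup M] [Module R M] {f g : M →ₗ[R] R} (h : ∀ x, f x ^ 2 = g x ^ 2) :
    f = g ∨ f = -g := by
  by_contra! hfg
  obtain ⟨u, hu⟩ := DFunLike.ne_iff.mp hfg.1
  obtain ⟨w, hw⟩ := DFunLike.ne_iff.mp hfg.2
  have hu' : f u = -g u := (_root_.eq_or_eq_neg_of_sq_eq_sq _ _ (h u)).resolve_left hu
  have hw' : f w = g w := (_root_.eq_or_eq_neg_of_sq_eq_sq _ _ (h w)).resolve_right hw
  rcases _root_.eq_or_eq_neg_of_sq_eq_sq _ _ (h (u + w)) with huw | huw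
  · exact hu (by simp only [map_add, hw'] at huw; linear_combination huw)
  · exact hw (by simp only [map_add, hu'] at huw; rw [LinearMap.neg_apply]; linear_combination huw)

variable {L : Type} [LieRing L] [LieAlgebra ℝ L]

def adSqEigenspace (V a : Submodule ℝ L) (χ : a → ℝ) : Submodule ℝ L where
  carrier := {X | X ∈ V ∧ ∀ Z : a, ⁅(Z : L), ⁅(Z : L), X⁆⁆ = χ Z • X}
  zero_mem' := ⟨V.zero_mem, fun Z => by simp⟩
  add_mem' := fun hX hY => ⟨V.add_mem hX.1 hY.1, fun Z => by
    rw [lie_add, lie_add, hX.2 Z, hY.2 Z, smul_add]⟩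
  smul_mem' := fun c X hX => ⟨V.smul_mem c hX.1, fun Z => by
    rw [lie_smul, lie_smul, hX.2 Z, smul_comm]⟩

lemma IsFlat.exists_eq_neg_sq_of_adSq_eigenvector {a : Submodule ℝ L} (ha : IsFlat a)
    {X : L} (hX : X ≠ 0) {χ : a → ℝ} (hχ : ∀ Z : a, ⁅(Z : L), ⁅(Z : L), X⁆⁆ = χ Z • X)
    {Z₀ : a} {s : ℝ} (hs : s ≠ 0) (hZ₀ : χ Z₀ = -s ^ 2) :
    ∃ lam : a →ₗ[ℝ] ℝ, ∀ Z, χ Z = -lam Z ^ 2 := by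
  have cancel := smul_left_injective ℝ hX
  have hcomm (Z : a) := lie_lie_comm_of_lie_eq_zero (ha _ Z₀.2 _ Z.2)
  have hpolar (Z : a) :
      ⁅(Z : L), ⁅(Z₀ : L), X⁆⁆ = ((χ (Z + Z₀) - χ Z - χ Z₀) / 2) • X := by
    have h := hχ (Z + Z₀)
    simp only [Submodule.coe_add, add_lie, lie_add, hcomm Z, hχ] at h
    linear_combination (norm := module) (1 / 2 : ℝ) • h
  obtain ⟨b, hb⟩ : ∃ b : a →ₗ[ℝ] ℝ, ∀ Z : a, ⁅(Z : L), ⁅(Z₀ : L), X⁆⁆ = b Z • X :=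
    ⟨{ toFun := fun Z => (χ (Z + Z₀) - χ Z - χ Z₀) / 2
       map_add' := fun Z Z' => cancel <| by
         simp only [← hpolar, Submodule.coe_add, add_lie, add_smul]
       map_smul' := fun c Z => cancel <| by
         simp only [← hpolar, SetLike.val_smul, smul_lie, RingHom.id_apply, smul_eq_mul,
           ← smul_smul] }, hpolar⟩
  have hb_sq (Z : a) : b Z ^ 2 = χ Z * χ Z₀ := cancel <| by
    calc (b Z ^ 2) • X = ⁅(Z : L), ⁅(Z₀ : L), ⁅(Z : L), ⁅(Z₀ : L), X⁆⁆⁆⁆ := by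
          rw [hb, lie_smul, lie_smul, hb, smul_smul, sq]
      _ = (χ Z * χ Z₀) • X := by
          rw [hcomm Z, hχ, lie_smul, lie_smul, hχ, smul_smul, mul_comm]
  refine ⟨s⁻¹ • b, fun Z => ?_⟩
  rw [LinearMap.smul_apply, smul_eq_mul, mul_pow, hb_sq, hZ₀]
  field_simp

noncomputable abbrev negKillingCore (hkill : ∀ X : L, X ≠ 0 → killingForm ℝ L X X < 0) :
    InnerProductSpace.Core ℝ L where
  inner X Y := -killingForm ℝ L X Y
  conj_inner_symm X Y := by
    simp only [starRingEnd_apply, star_trivial, LieModule.traceForm_comm ℝ L L Y X]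
  re_inner_nonneg X := by
    rcases eq_or_ne X 0 with rfl | hX
    · simp
    · simpa using (hkill X hX).le
  add_left X Y Z := by simp only [map_add, LinearMap.add_apply, neg_add]
  smul_left X Y r := by simp
  definite X hX := by
    by_contra h
    exact (hkill X h).ne (neg_eq_zero.mp hX)

lemma killingForm_lie_lie_left (Z X Y : L) :
    killingForm ℝ L ⁅Z, ⁅Z, X⁆⁆ Y = killingForm ℝ L X ⁅Z, ⁅Z, Y⁆⁆ := by
  rw [LieModule.traceForm_apply_lie_apply', LieModule.traceForm_apply_lie_apply', neg_neg]

lemma le_iSup_adSqEigenspace [Module.Finite ℝ L] (hkill : ∀ X : L, X ≠ 0 → killingForm ℝ L X X < 0)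
    {a : Submodule ℝ L} (ha : IsFlat a) {V : Submodule ℝ L}
    (hV : ∀ Z ∈ a, ∀ X ∈ V, ⁅Z, ⁅Z, X⁆⁆ ∈ V) :
    V ≤ ⨆ χ : a → ℝ, adSqEigenspace V a χ := by
  let T (Z : a) : Module.End ℝ V :=
    (LieAlgebra.ad ℝ L Z ∘ₗ LieAlgebra.ad ℝ L Z).restrict fun X hX => hV Z Z.2 X hX
  have hT (Z : a) (X : V) : (T Z X : L) = ⁅(Z : L), ⁅(Z : L), (X : L)⁆⁆ := rfl
  have hcomm : Pairwise fun Z W => Commute (T Z) (T W) := fun Z W _ =>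
    LinearMap.ext fun X => Subtype.ext <| by
      change ⁅(Z : L), ⁅(Z : L), ⁅(W : L), ⁅(W : L), (X : L)⁆⁆⁆⁆ =
        ⁅(W : L), ⁅(W : L), ⁅(Z : L), ⁅(Z : L), (X : L)⁆⁆⁆⁆
      simp only [lie_lie_comm_of_lie_eq_zero (ha _ Z.2 _ W.2)]
  let _ : NormedAddCommGroup L := (negKillingCore hkill).toNormedAddCommGroup
  let _ : InnerProductSpace ℝ L := InnerProductSpace.ofCore (negKillingCore hkill).toCore
  have hsymm (Z : a) : (T Z).IsSymmetric := fun X Y => by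
    change -killingForm ℝ L (T Z X) Y = -killingForm ℝ L X (T Z Y)
    rw [hT, hT, killingForm_lie_lie_left]
  have hdiag := LinearMap.IsSymmetric.iSup_iInf_eq_top_of_commute hsymm hcomm
  intro X hX
  have hX' : X ∈ (⨆ χ : a → ℝ, ⨅ Z, Module.End.eigenspace (T Z) (χ Z)).map V.subtype := by
    rw [hdiag]
    exact ⟨⟨X, hX⟩, trivial, rfl⟩
  have hmap (χ : a → ℝ) :
      (⨅ Z, Module.End.eigenspace (T Z) (χ Z)).map V.subtype ≤ adSqEigenspace V a χ := by
    rintro _ ⟨Y, hY, rfl⟩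
    exact ⟨Y.2, fun Z => congrArg Subtype.val <|
      Module.End.mem_eigenspace_iff.mp ((Submodule.mem_iInf _).mp hY Z)⟩
  rw [Submodule.map_iSup] at hX'
  exact iSup_mono hmap hX'

lemma restrictForm_neg {a' a : Submodule ℝ L} (h : a' ≤ a) (lam : a →ₗ[ℝ] ℝ) :
    restrictForm h (-lam) = -restrictForm h lam :=
  LinearMap.neg_comp _ _

lemma rootSpaceIn_eq_inf_of_le {m m' : Submodule ℝ L} (hm' : m' ≤ m) (a : Submodule ℝ L)
    (lam : a →ₗ[ℝ] ℝ) : rootSpaceIn m' a lam = rootSpaceIn m a lam ⊓ m' := by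
  ext X
  exact ⟨fun hX => ⟨⟨hm' hX.1, hX.2⟩, hX.1⟩, fun hX => ⟨hX.2, hX.1.2⟩⟩

lemma rootSpaceIn_le_rootSpaceIn_restrictForm (m : Submodule ℝ L) {a' a : Submodule ℝ L}
    (h : a' ≤ a) (lam : a →ₗ[ℝ] ℝ) :
    rootSpaceIn m a lam ≤ rootSpaceIn m a' (restrictForm h lam) :=
  fun _ hX => ⟨hX.1, fun W => hX.2 (Submodule.inclusion h W)⟩

lemma adSq_mem_rootSpaceIn {m a' a : Submodule ℝ L}
    (hm : ∀ x ∈ m, ∀ y ∈ m, ∀ z ∈ m, ⁅⁅x, y⁆, z⁆ ∈ m) (ham : a ≤ m) (ha : IsFlat a)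
    (h : a' ≤ a) (α : a' →ₗ[ℝ] ℝ) {Z : L} (hZ : Z ∈ a) {X : L}
    (hX : X ∈ rootSpaceIn m a' α) : ⁅Z, ⁅Z, X⁆⁆ ∈ rootSpaceIn m a' α := by
  refine ⟨?_, fun W => ?_⟩
  · rw [← lie_skew]
    exact m.neg_mem (hm _ (ham hZ) _ hX.1 _ (ham hZ))
  · simp only [lie_lie_comm_of_lie_eq_zero (ha _ (h W.2) _ hZ), hX.2 W, lie_smul]

def rootSpacesOver (m : Submodule ℝ L) {a' a : Submodule ℝ L} (h : a' ≤ a)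
    (α : a' →ₗ[ℝ] ℝ) : Submodule ℝ L :=
  ⨆ lam ∈ {l : a →ₗ[ℝ] ℝ | l ∈ rootSystemIn m a ∧ restrictForm h l = α}, rootSpaceIn m a lam

section RootSpacesOver

variable {m a' a : Submodule ℝ L} {h : a' ≤ a} {α : a' →ₗ[ℝ] ℝ}

lemma mem_rootSpacesOver {lam : a →ₗ[ℝ] ℝ} (hlam : lam ∈ rootSystemIn m a)
    (hres : restrictForm h lam = α) {X : L} (hX : X ∈ rootSpaceIn m a lam) :
    X ∈ rootSpacesOver m h α :=
  Submodule.mem_iSup_of_mem lam (Submodule.mem_iSup_of_mem ⟨hlam, hres⟩ hX)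

lemma rootSpacesOver_le_rootSpaceIn : rootSpacesOver m h α ≤ rootSpaceIn m a' α :=
  iSup₂_le fun lam hlam => hlam.2 ▸ rootSpaceIn_le_rootSpaceIn_restrictForm m h lam

lemma exists_restrictForm_eq_of_rootSpacesOver_ne_bot (hne : rootSpacesOver m h α ≠ ⊥) :
    ∃ lam ∈ rootSystemIn m a, restrictForm h lam = α := by
  contrapose! hne
  exact iSup₂_eq_bot.mpr fun lam hlam => absurd hlam.2 (hne lam hlam.1)

lemma adSqEigenspace_le_rootSpacesOver (ha : IsFlat a) (hα : α ≠ 0) (χ : a → ℝ) :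
    adSqEigenspace (rootSpaceIn m a' α) a χ ≤ rootSpacesOver m h α := by
  rintro X ⟨⟨hXm, hXα⟩, hXχ⟩
  rcases eq_or_ne X 0 with rfl | hX
  · exact zero_mem _
  have cancel := smul_left_injective ℝ hX
  have hχα (W : a') : χ (Submodule.inclusion h W) = -α W ^ 2 :=
    cancel ((hXχ _).symm.trans (hXα W))
  obtain ⟨W₀, hW₀⟩ : ∃ W₀, α W₀ ≠ 0 := DFunLike.ne_iff.mp hα
  obtain ⟨lam, hlam⟩ := ha.exists_eq_neg_sq_of_adSq_eigenvector hX hXχ hW₀ (hχα W₀)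
  have hres : restrictForm h lam = α ∨ restrictForm h lam = -α :=
    LinearMap.eq_or_eq_neg_of_sq_eq_sq fun W => neg_inj.mp <| (hlam _).symm.trans (hχα W)
  obtain ⟨μ, hμα, hμ⟩ : ∃ μ : a →ₗ[ℝ] ℝ, restrictForm h μ = α ∧ ∀ Z, χ Z = -μ Z ^ 2 := by
    rcases hres with hres | hres
    · exact ⟨lam, hres, hlam⟩
    · exact ⟨-lam, by rw [restrictForm_neg, hres, neg_neg], by simpa only [LinearMap.neg_apply,
        neg_sq] using hlam⟩
  have hXμ : X ∈ rootSpaceIn m a μ := ⟨hXm, fun Z => by rw [hXχ, hμ]⟩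
  refine mem_rootSpacesOver ⟨?_, fun hbot => hX ?_⟩ hμα hXμ
  · rintro rfl
    exact hα (hμα ▸ LinearMap.zero_comp _)
  · simpa [hbot] using hXμ

theorem rootSpaceIn_le_rootSpacesOver [Module.Finite ℝ L]
    (hkill : ∀ X : L, X ≠ 0 → killingForm ℝ L X X < 0)
    (hm : ∀ x ∈ m, ∀ y ∈ m, ∀ z ∈ m, ⁅⁅x, y⁆, z⁆ ∈ m) (ham : a ≤ m) (ha : IsFlat a)
    (hα : α ≠ 0) : rootSpaceIn m a' α ≤ rootSpacesOver m h α :=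
  (le_iSup_adSqEigenspace hkill ha fun _ hZ _ hX => adSq_mem_rootSpaceIn hm ham ha h α hZ hX).trans
    (iSup_le (adSqEigenspace_le_rootSpacesOver ha hα))

end RootSpacesOver

end RootSpaces

theorem stmt0_general {L : Type} [LieRing L] [LieAlgebra ℝ L] [Module.Finite ℝ L]
    (hkill : ∀ X : L, X ≠ 0 → killingForm ℝ L X X < 0)
    (k m : Submodule ℝ L)
    (hkm : ∀ x ∈ k, ∀ y ∈ m, ⁅x, y⁆ ∈ m)
    (hmm : ∀ x ∈ m, ∀ y ∈ m, ⁅x, y⁆ ∈ k)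
    (m' : Submodule ℝ L) (hm' : IsLieTripleSystemIn m m')
    (a' a : Submodule ℝ L)
    (ha : IsCartanSubalgebraIn m a)
    (haa' : a' = a ⊓ m') :
    (∀ α ∈ rootSystemIn m' a',
      (∃ lam ∈ rootSystemIn m a,
          restrictForm (haa'.trans_le inf_le_left) lam ≠ 0 ∧
          restrictForm (haa'.trans_le inf_le_left) lam = α) ∧
      rootSpaceIn m' a' α =
        (⨆ lam ∈ {l : ↥a →ₗ[ℝ] ℝ | l ∈ rootSystemIn m a ∧
            restrictForm (haa'.trans_le inf_le_left) l = α}, rootSpaceIn m a lam) ⊓ m') ∧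
    (a' = a → ∀ α ∈ rootSystemIn m' a',
      ∃ lam ∈ rootSystemIn m a,
        restrictForm (haa'.trans_le inf_le_left) lam = α ∧
        rootSpaceIn m' a' α = rootSpaceIn m a lam ⊓ m') := by
  have hm : ∀ x ∈ m, ∀ y ∈ m, ∀ z ∈ m, ⁅⁅x, y⁆, z⁆ ∈ m :=
    fun x hx y hy z hz => hkm _ (hmm x hx y hy) z hz
  refine ⟨fun α hα => ?_, ?_⟩
  · have hsup : rootSpaceIn m' a' α = rootSpacesOver m (haa'.trans_le inf_le_left) α ⊓ m' := by
      rw [rootSpaceIn_eq_inf_of_le hm'.1]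
      exact le_antisymm
        (inf_le_inf_right _ (rootSpaceIn_le_rootSpacesOver hkill hm ha.1 ha.2.1 hα.1))
        (inf_le_inf_right _ rootSpacesOver_le_rootSpaceIn)
    obtain ⟨lam, hlam, hres⟩ := exists_restrictForm_eq_of_rootSpacesOver_ne_bot <|
      ne_bot_of_le_ne_bot hα.2 (hsup.le.trans inf_le_left)
    exact ⟨⟨lam, hlam, hres ▸ hα.1, hres⟩, hsup⟩
  · rintro rfl α hα
    have hsp := rootSpaceIn_eq_inf_of_le hm'.1 a' α
    exact ⟨α, ⟨hα.1, ne_bot_of_le_ne_bot hα.2 (hsp.le.trans inf_le_left)⟩, rfl, hsp⟩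

/-- Proposition 2.1: relation between the roots and root spaces of a Lie triple system `m'`
and those of the ambient space `m`. -/
theorem stmt0 {L : Type} [LieRing L] [LieAlgebra ℝ L] [Module.Finite ℝ L]
    (hkill : ∀ X : L, X ≠ 0 → killingForm ℝ L X X < 0)
    (k m : Submodule ℝ L) (hcompl : IsCompl k m)
    (hkk : ∀ x ∈ k, ∀ y ∈ k, ⁅x, y⁆ ∈ k)
    (hkm : ∀ x ∈ k, ∀ y ∈ m, ⁅x, y⁆ ∈ m)
    (hmm : ∀ x ∈ m, ∀ y ∈ m, ⁅x, y⁆ ∈ k)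
    (m' : Submodule ℝ L) (hm' : IsLieTripleSystemIn m m')
    (a' a : Submodule ℝ L)
    (ha' : IsCartanSubalgebraIn m' a') (ha : IsCartanSubalgebraIn m a)
    (haa' : a' = a ⊓ m') :
    (∀ α ∈ rootSystemIn m' a',
      (∃ lam ∈ rootSystemIn m a,
          restrictForm (haa'.trans_le inf_le_left) lam ≠ 0 ∧
          restrictForm (haa'.trans_le inf_le_left) lam = α) ∧
      rootSpaceIn m' a' α =
        (⨆ lam ∈ {l : ↥a →ₗ[ℝ] ℝ | l ∈ rootSystemIn m a ∧
            restrictForm (haa'.trans_le inf_le_left) l = α}, rootSpaceIn m a lam) ⊓ m') ∧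
    (a' = a → ∀ α ∈ rootSystemIn m' a',
      ∃ lam ∈ rootSystemIn m a,
        restrictForm (haa'.trans_le inf_le_left) lam = α ∧
        rootSpaceIn m' a' α = rootSpaceIn m a lam ⊓ m') :=
  stmt0_general hkill k m hkm hmm m' hm' a' a ha haa'
end

section
/- Let m' ⊆ m be a Lie triple system, a' a Cartan subalgebra of m', a a Cartan subalgebra of m with a' = a ∩ m', and α ∈ Δ(m',a'). (a) If there is exactly one root λ ∈ Δ(m,a) with λ|_{a'} = α (α is elementary), then the Riesz vector λ^♯ lies in a'. (b) If λ, μ ∈ Δ(m,a) are two distinct roots with λ|_{a'} = α = μ|_{a'} (α is composite), then λ^♯ − μ^♯ is orthogonal to a' with respect to ⟨·,·⟩. -/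
section

variable {L : Type} [LieRing L] [LieAlgebra ℝ L]

local notation "κ" => killingForm ℝ L

lemma eq_zero_of_killingForm_self_eq_zero (hkill : ∀ X : L, X ≠ 0 → κ X X < 0) {x : L}
    (hx : κ x x = 0) : x = 0 := by
  by_contra hx0
  exact (hkill x hx0).ne hx

noncomputable abbrev killingInnerProductCore (hkill : ∀ X : L, X ≠ 0 → κ X X < 0) :
    InnerProductSpace.Core ℝ L where
  inner x y := -κ x y
  conj_inner_symm x y := by simp [LieModule.traceForm_comm ℝ L L x y]
  re_inner_nonneg x := by
    by_cases hx : x = 0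
    · simp [hx]
    · simpa using (hkill x hx).le
  add_left x y z := by simp only [map_add, LinearMap.add_apply]; ring
  smul_left x y r := by simp
  definite x hx := eq_zero_of_killingForm_self_eq_zero hkill (by simpa using hx)

lemma IsFlat.lie_lie_comm {a : Submodule ℝ L} (ha : IsFlat a) {u u' : L} (hu : u ∈ a)
    (hu' : u' ∈ a) (y : L) : ⁅u, ⁅u', y⁆⁆ = ⁅u', ⁅u, y⁆⁆ := by
  rw [← sub_eq_zero, ← lie_lie, ha u hu u' hu', zero_lie]

lemma IsFlat.lie_lie_lie_comm {a : Submodule ℝ L} (ha : IsFlat a) {z u u' : L} (hz : z ∈ a)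
    (hu : u ∈ a) (hu' : u' ∈ a) (y : L) : ⁅z, ⁅u, ⁅u', y⁆⁆⁆ = ⁅u, ⁅u', ⁅z, y⁆⁆⁆ := by
  rw [ha.lie_lie_comm hz hu, ha.lie_lie_comm hz hu']

lemma lie_lie_mem_of_lie_lie_mem {m : Submodule ℝ L}
    (hm : ∀ x ∈ m, ∀ y ∈ m, ∀ z ∈ m, ⁅⁅x, y⁆, z⁆ ∈ m) {x y z : L} (hx : x ∈ m) (hy : y ∈ m)
    (hz : z ∈ m) : ⁅x, ⁅y, z⁆⁆ ∈ m := by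
  rw [← lie_skew, ← neg_lie, lie_skew]
  exact hm z hz y hy x hx

lemma IsCartanSubalgebraIn.mem_of_forall_lie_eq_zero {m a : Submodule ℝ L}
    (ha : IsCartanSubalgebraIn m a) {x : L} (hx : x ∈ m) (hxa : ∀ y ∈ a, ⁅y, x⁆ = 0) :
    x ∈ a := by
  have hflat : IsFlat (a ⊔ Submodule.span ℝ {x}) := by
    intro y hy z hz
    obtain ⟨y₁, hy₁, y₂, hy₂, rfl⟩ := Submodule.mem_sup.mp hy
    obtain ⟨z₁, hz₁, z₂, hz₂, rfl⟩ := Submodule.mem_sup.mp hz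
    obtain ⟨s, rfl⟩ := Submodule.mem_span_singleton.mp hy₂
    obtain ⟨t, rfl⟩ := Submodule.mem_span_singleton.mp hz₂
    have hxz : ⁅x, z₁⁆ = 0 := by rw [← lie_skew, hxa z₁ hz₁, neg_zero]
    simp [ha.2.1 y₁ hy₁ z₁ hz₁, hxa y₁ hy₁, hxz]
  have hle : a ⊔ Submodule.span ℝ {x} ≤ m :=
    sup_le ha.1 ((Submodule.span_singleton_le_iff_mem x m).mpr hx)
  rw [← ha.2.2 _ hle hflat le_sup_left]
  exact Submodule.mem_sup_right (Submodule.mem_span_singleton_self x)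

@[simp]
lemma mem_rootSpaceIn {m a : Submodule ℝ L} {f : ↥a →ₗ[ℝ] ℝ} {x : L} :
    x ∈ rootSpaceIn m a f ↔ x ∈ m ∧ ∀ Z : ↥a, ⁅(Z : L), ⁅(Z : L), x⁆⁆ = (-(f Z ^ 2)) • x :=
  Iff.rfl

lemma rootSpaceIn_mono {m m' a : Submodule ℝ L} (h : m' ≤ m) (f : ↥a →ₗ[ℝ] ℝ) :
    rootSpaceIn m' a f ≤ rootSpaceIn m a f :=
  fun _ hx => ⟨h hx.1, hx.2⟩

lemma rootSpaceIn_neg (m a : Submodule ℝ L) (f : ↥a →ₗ[ℝ] ℝ) :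
    rootSpaceIn m a (-f) = rootSpaceIn m a f := by
  ext x
  simp

lemma mem_rootSpaceIn_restrictForm {m a b : Submodule ℝ L} (hba : b ≤ a) {f : ↥a →ₗ[ℝ] ℝ}
    {x : L} (hx : x ∈ rootSpaceIn m a f) : x ∈ rootSpaceIn m b (restrictForm hba f) :=
  ⟨hx.1, fun Z => hx.2 (Submodule.inclusion hba Z)⟩

lemma sq_eq_sq_of_mem_rootSpaceIn {m a : Submodule ℝ L} {f g : ↥a →ₗ[ℝ] ℝ} {x : L}
    (hx0 : x ≠ 0) (hf : x ∈ rootSpaceIn m a f) (hg : x ∈ rootSpaceIn m a g) (Z : ↥a) :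
    f Z ^ 2 = g Z ^ 2 :=
  neg_inj.mp (smul_left_injective ℝ hx0 ((hf.2 Z).symm.trans (hg.2 Z)))

lemma lie_lie_eq_of_mem_rootSpaceIn {m a : Submodule ℝ L} (ha : IsFlat a) {f : ↥a →ₗ[ℝ] ℝ}
    {x : L} (hx : x ∈ rootSpaceIn m a f) (u u' : ↥a) :
    ⁅(u : L), ⁅(u' : L), x⁆⁆ = (-(f u * f u')) • x := by
  have h := hx.2 (u + u')
  simp only [Submodule.coe_add, add_lie, lie_add, map_add, hx.2 u, hx.2 u',
    ha.lie_lie_comm u'.2 u.2] at h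
  refine smul_right_injective L (two_ne_zero (α := ℝ)) ?_
  change (2 : ℝ) • _ = (2 : ℝ) • _
  linear_combination (norm := module) h

lemma lie_lie_mem_rootSpaceIn {m a b : Submodule ℝ L}
    (hm : ∀ x ∈ m, ∀ y ∈ m, ∀ z ∈ m, ⁅⁅x, y⁆, z⁆ ∈ m) (ha : IsFlat a) (ham : a ≤ m)
    (hba : b ≤ a) {f : ↥b →ₗ[ℝ] ℝ} {x : L} (hx : x ∈ rootSpaceIn m b f) {u u' : L}
    (hu : u ∈ a) (hu' : u' ∈ a) : ⁅u, ⁅u', x⁆⁆ ∈ rootSpaceIn m b f := by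
  refine ⟨lie_lie_mem_of_lie_lie_mem hm (ham hu) (ham hu') hx.1, fun Z => ?_⟩
  have hZ : (Z : L) ∈ a := hba Z.2
  rw [ha.lie_lie_lie_comm hZ hu hu', ha.lie_lie_lie_comm hZ hu hu', hx.2 Z, lie_smul, lie_smul]

def IsJointEigenvector (a : Submodule ℝ L) (v : L) : Prop :=
  ∀ u ∈ a, ∀ u' ∈ a, ∃ c : ℝ, ⁅u, ⁅u', v⁆⁆ = c • v

lemma exists_linearMap_of_isJointEigenvector (hkill : ∀ X : L, X ≠ 0 → κ X X < 0)
    {a : Submodule ℝ L} (ha : IsFlat a) {v : L} (hv : IsJointEigenvector a v) :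
    ∃ μ : ↥a →ₗ[ℝ] ℝ, ∀ u : ↥a, ⁅(u : L), ⁅(u : L), v⁆⁆ = (-(μ u ^ 2)) • v := by
  by_cases hcent : ∀ u ∈ a, ⁅u, v⁆ = 0
  · exact ⟨0, fun u => by simp [hcent u u.2]⟩
  push Not at hcent
  obtain ⟨u₀, hu₀, hw₀⟩ := hcent
  obtain ⟨c₀, hc₀⟩ := hv u₀ hu₀ u₀ hu₀
  have hv0 : v ≠ 0 := by rintro rfl; simp at hw₀
  have hc₀neg : c₀ < 0 := by
    have h : κ ⁅u₀, v⁆ ⁅u₀, v⁆ = -(c₀ * κ v v) := by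
      rw [LieModule.traceForm_apply_lie_apply', hc₀, map_smul, smul_eq_mul]
    nlinarith [hkill _ hw₀, hkill _ hv0]
  have hline : ∀ u ∈ a, ∃ s : ℝ, ⁅u, v⁆ = s • ⁅u₀, v⁆ := by
    intro u hu
    obtain ⟨c, hc⟩ := hv u hu u₀ hu₀
    refine ⟨c₀⁻¹ * c, ?_⟩
    have h : c₀ • ⁅u, v⁆ = c • ⁅u₀, v⁆ := by
      rw [← lie_smul, ← hc₀, ha.lie_lie_comm hu hu₀, hc, lie_smul]
    rw [mul_smul, ← h, smul_smul, inv_mul_cancel₀ hc₀neg.ne, one_smul]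
  -- pairing with `⁅u₀, v⁆` reads off the coefficient and makes it linear in `u`
  obtain ⟨φ, hφ⟩ : ∃ φ : ↥a →ₗ[ℝ] ℝ, ∀ u : ↥a, ⁅(u : L), v⁆ = φ u • ⁅u₀, v⁆ := by
    refine ⟨(κ ⁅u₀, v⁆ ⁅u₀, v⁆)⁻¹ •
      (κ ⁅u₀, v⁆ ∘ₗ (LieAlgebra.ad ℝ L : L →ₗ[ℝ] Module.End ℝ L).flip v ∘ₗ a.subtype),
      fun u => ?_⟩
    obtain ⟨s, hs⟩ := hline u u.2
    change ⁅(u : L), v⁆ = ((κ ⁅u₀, v⁆ ⁅u₀, v⁆)⁻¹ * κ ⁅u₀, v⁆ ⁅(u : L), v⁆) • ⁅u₀, v⁆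
    rw [hs, map_smul, smul_eq_mul, mul_left_comm, inv_mul_cancel₀ (hkill _ hw₀).ne, mul_one]
  refine ⟨Real.sqrt (-c₀) • φ, fun u => ?_⟩
  have hsq : Real.sqrt (-c₀) ^ 2 = -c₀ := Real.sq_sqrt (by linarith)
  calc ⁅(u : L), ⁅(u : L), v⁆⁆ = φ u • ⁅(u : L), ⁅u₀, v⁆⁆ := by rw [hφ u, lie_smul]
    _ = φ u • ⁅u₀, ⁅(u : L), v⁆⁆ := by rw [ha.lie_lie_comm u.2 hu₀]
    _ = (φ u * φ u * c₀) • v := by rw [hφ u, lie_smul, hc₀, smul_smul, smul_smul]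
    _ = (-((Real.sqrt (-c₀) • φ) u ^ 2)) • v := by
        rw [LinearMap.smul_apply, smul_eq_mul, mul_pow, hsq]
        congr 1
        ring

end

section

variable {L : Type} [LieRing L] [LieAlgebra ℝ L] [Module.Finite ℝ L]

local notation "κ" => killingForm ℝ L

lemma le_of_forall_isJointEigenvector_mem (hkill : ∀ X : L, X ≠ 0 → κ X X < 0)
    {a V P : Submodule ℝ L} (ha : IsFlat a)
    (hV : ∀ u ∈ a, ∀ u' ∈ a, ∀ x ∈ V, ⁅u, ⁅u', x⁆⁆ ∈ V)
    (hP : ∀ v ∈ V, IsJointEigenvector a v → v ∈ P) : V ≤ P := by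
  let core := killingInnerProductCore hkill
  let _ : NormedAddCommGroup L := core.toNormedAddCommGroup
  let _ : InnerProductSpace ℝ L := InnerProductSpace.ofCore core.toCore
  let T : ↥a × ↥a → Module.End ℝ V := fun p =>
    (LieAlgebra.ad ℝ L p.1 ∘ₗ LieAlgebra.ad ℝ L p.2).restrict (hV _ p.1.2 _ p.2.2)
  have hT : ∀ p, (T p).IsSymmetric := fun p v w => by
    change -κ ⁅(p.1 : L), ⁅(p.2 : L), (v : L)⁆⁆ w = -κ v ⁅(p.1 : L), ⁅(p.2 : L), (w : L)⁆⁆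
    rw [LieModule.traceForm_apply_lie_apply', LieModule.traceForm_apply_lie_apply', neg_neg,
      ha.lie_lie_comm p.2.2 p.1.2]
  have hC : Pairwise (Function.onFun Commute T) := by
    intro p q _
    refine LinearMap.ext fun v => Subtype.ext ?_
    change ⁅(p.1 : L), ⁅(p.2 : L), ⁅(q.1 : L), ⁅(q.2 : L), (v : L)⁆⁆⁆⁆ =
      ⁅(q.1 : L), ⁅(q.2 : L), ⁅(p.1 : L), ⁅(p.2 : L), (v : L)⁆⁆⁆⁆
    rw [ha.lie_lie_lie_comm p.2.2 q.1.2 q.2.2, ha.lie_lie_lie_comm p.1.2 q.1.2 q.2.2]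
  have hjoint : ∀ χ : ↥a × ↥a → ℝ,
      ⨅ p, Module.End.eigenspace (T p) (χ p) ≤ P.comap V.subtype := fun χ v hv =>
    hP v v.2 fun u hu u' hu' => ⟨χ (⟨u, hu⟩, ⟨u', hu'⟩), congrArg Subtype.val <|
      Module.End.mem_eigenspace_iff.mp ((Submodule.mem_iInf _).mp hv (⟨u, hu⟩, ⟨u', hu'⟩))⟩
  intro x hx
  have hmem : (⟨x, hx⟩ : V) ∈ ⨆ χ : ↥a × ↥a → ℝ, ⨅ p, Module.End.eigenspace (T p) (χ p) := by
    rw [LinearMap.IsSymmetric.iSup_iInf_eq_top_of_commute hT hC]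
    trivial
  exact iSup_le hjoint hmem

lemma rootSpaceIn_le_of_forall_restrictForm_eq (hkill : ∀ X : L, X ≠ 0 → κ X X < 0)
    {m a b : Submodule ℝ L} (hm : ∀ x ∈ m, ∀ y ∈ m, ∀ z ∈ m, ⁅⁅x, y⁆, z⁆ ∈ m)
    (ha : IsCartanSubalgebraIn m a) (hba : b ≤ a) {α : ↥b →ₗ[ℝ] ℝ} (hα : α ≠ 0)
    {lam : ↥a →ₗ[ℝ] ℝ} (huniq : ∀ mu ∈ rootSystemIn m a, restrictForm hba mu = α → mu = lam) :
    rootSpaceIn m b α ≤ rootSpaceIn m a lam := by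
  refine le_of_forall_isJointEigenvector_mem hkill ha.2.1
    (fun u hu u' hu' x hx => lie_lie_mem_rootSpaceIn hm ha.2.1 ha.1 hba hx hu hu') ?_
  intro v hv hvj
  by_cases hv0 : v = 0
  · exact hv0 ▸ Submodule.zero_mem _
  obtain ⟨μ, hμ⟩ := exists_linearMap_of_isJointEigenvector hkill ha.2.1 hvj
  have hvμ : v ∈ rootSpaceIn m a μ := ⟨hv.1, hμ⟩
  obtain ⟨ν, hvν, hνα⟩ : ∃ ν, v ∈ rootSpaceIn m a ν ∧ restrictForm hba ν = α := by
    rcases LinearMap.eq_or_eq_neg_of_sq_eq_sq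
        (sq_eq_sq_of_mem_rootSpaceIn hv0 (mem_rootSpaceIn_restrictForm hba hvμ) hv) with h | h
    · exact ⟨μ, hvμ, h⟩
    · exact ⟨-μ, (rootSpaceIn_neg m a μ).symm ▸ hvμ, by
        rw [restrictForm, LinearMap.neg_comp, ← restrictForm, h, neg_neg]⟩
  have hν0 : ν ≠ 0 := by
    rintro rfl
    exact hα (hνα.symm.trans (LinearMap.zero_comp _))
  rwa [← huniq ν ⟨hν0, (Submodule.ne_bot_iff _).mpr ⟨v, hvν, hv0⟩⟩ hνα]

lemma le_sup_orthogonal_of_isCartanSubalgebraIn (hkill : ∀ X : L, X ≠ 0 → κ X X < 0)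
    {m' a' a : Submodule ℝ L} (hm' : ∀ x ∈ m', ∀ y ∈ m', ∀ z ∈ m', ⁅⁅x, y⁆, z⁆ ∈ m')
    (ha' : IsCartanSubalgebraIn m' a') (ha : IsFlat a) (ha'a : a' ≤ a) :
    m' ≤ a' ⊔ (killingForm ℝ L).orthogonal a := by
  refine le_of_forall_isJointEigenvector_mem hkill ha'.2.1
    (fun u hu u' hu' x hx => lie_lie_mem_of_lie_lie_mem hm' (ha'.1 hu) (ha'.1 hu') hx) ?_
  intro v hv hvj
  by_cases hcent : ∀ Y ∈ a', ⁅Y, ⁅Y, v⁆⁆ = 0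
  · refine Submodule.mem_sup_left (ha'.mem_of_forall_lie_eq_zero hv fun Y hY => ?_)
    refine eq_zero_of_killingForm_self_eq_zero hkill ?_
    rw [LieModule.traceForm_apply_lie_apply', hcent Y hY, map_zero, neg_zero]
  push Not at hcent
  obtain ⟨Y, hY, hYv⟩ := hcent
  obtain ⟨c, hc⟩ := hvj Y hY Y hY
  have hc0 : c ≠ 0 := by
    rintro rfl
    exact hYv (hc.trans (zero_smul ℝ v))
  -- `v` lies in the range of `ad Y ∘ ad Y`, which is orthogonal to `a` since `⁅a, Y⁆ = 0`
  refine Submodule.mem_sup_right fun u hu => ?_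
  rw [← inv_smul_smul₀ hc0 v, ← hc, map_smul, ← LieModule.traceForm_apply_lie_apply,
    ha u hu Y (ha'a hY), map_zero, LinearMap.zero_apply, smul_zero]

lemma rieszVector_mem_of_mem_rootSpaceIn (hkill : ∀ X : L, X ≠ 0 → κ X X < 0)
    {m' a' a : Submodule ℝ L} (hm' : ∀ x ∈ m', ∀ y ∈ m', ∀ z ∈ m', ⁅⁅x, y⁆, z⁆ ∈ m')
    (ha' : IsCartanSubalgebraIn m' a') (ha : IsFlat a) (ha'a : a' ≤ a) {lam : ↥a →ₗ[ℝ] ℝ}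
    (hlam : restrictForm ha'a lam ≠ 0) {X : L} (hX : X ∈ rootSpaceIn m' a lam) (hX0 : X ≠ 0)
    {lamSharp : L} (hls : lamSharp ∈ a) (hriesz : ∀ Z : ↥a, -κ (Z : L) lamSharp = lam Z) :
    lamSharp ∈ a' := by
  obtain ⟨Z, hZ⟩ : ∃ Z : ↥a', lam (Submodule.inclusion ha'a Z) ≠ 0 := by
    by_contra! hzero
    exact hlam (LinearMap.ext hzero)
  set z : ↥a := Submodule.inclusion ha'a Z
  have hH : ⁅⁅(z : L), X⁆, X⁆ ∈ m' := hm' _ (ha'.1 Z.2) _ hX.1 _ hX.1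
  obtain ⟨w, hw, o, ho, hwo⟩ :=
    Submodule.mem_sup.mp (le_sup_orthogonal_of_isCartanSubalgebraIn hkill hm' ha' ha ha'a hH)
  have hpair : ∀ u : ↥a, κ u w = -(lam u * lam z) * κ X X := by
    intro u
    have hu := LieModule.traceForm_apply_lie_apply ℝ L L u ⁅(z : L), X⁆ X
    rw [lie_lie_eq_of_mem_rootSpaceIn ha hX u z, ← hwo, map_add, ho u u.2, add_zero, map_smul,
      LinearMap.smul_apply, smul_eq_mul] at hu
    exact hu.symm
  have ht : lam z * κ X X ≠ 0 := mul_ne_zero hZ (hkill X hX0).ne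
  have hperp : w - (lam z * κ X X) • lamSharp = 0 := by
    refine eq_zero_of_killingForm_self_eq_zero hkill ?_
    set d : ↥a := ⟨_, a.sub_mem (ha'a hw) (a.smul_mem _ hls)⟩
    rw [map_sub, map_smul, smul_eq_mul, hpair d]
    linear_combination (lam z * κ X X) * hriesz d
  rw [sub_eq_zero] at hperp
  rw [← inv_smul_smul₀ ht lamSharp, ← hperp]
  exact a'.smul_mem _ hw

end

theorem stmt1_general {L : Type} [LieRing L] [LieAlgebra ℝ L] [Module.Finite ℝ L]
    (hkill : ∀ X : L, X ≠ 0 → killingForm ℝ L X X < 0)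
    (k m : Submodule ℝ L)
    (hkm : ∀ x ∈ k, ∀ y ∈ m, ⁅x, y⁆ ∈ m)
    (hmm : ∀ x ∈ m, ∀ y ∈ m, ⁅x, y⁆ ∈ k)
    (m' : Submodule ℝ L) (hm' : IsLieTripleSystemIn m m')
    (a' a : Submodule ℝ L)
    (ha' : IsCartanSubalgebraIn m' a') (ha : IsCartanSubalgebraIn m a)
    (haa' : a' = a ⊓ m')
    (α : ↥a' →ₗ[ℝ] ℝ) (hα : α ∈ rootSystemIn m' a') :
    (∀ lam ∈ rootSystemIn m a,
      restrictForm (haa'.trans_le inf_le_left) lam = α →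
      (∀ mu ∈ rootSystemIn m a,
        restrictForm (haa'.trans_le inf_le_left) mu = α → mu = lam) →
      ∀ lamSharp ∈ a,
        (∀ Z : ↥a, -(killingForm ℝ L (Z : L) lamSharp) = lam Z) →
        lamSharp ∈ a') ∧
    (∀ lam ∈ rootSystemIn m a, ∀ mu ∈ rootSystemIn m a, lam ≠ mu →
      restrictForm (haa'.trans_le inf_le_left) lam = α →
      restrictForm (haa'.trans_le inf_le_left) mu = α →
      ∀ lamSharp ∈ a,
        (∀ Z : ↥a, -(killingForm ℝ L (Z : L) lamSharp) = lam Z) →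
      ∀ muSharp ∈ a,
        (∀ Z : ↥a, -(killingForm ℝ L (Z : L) muSharp) = mu Z) →
      ∀ Z ∈ a', -(killingForm ℝ L Z (lamSharp - muSharp)) = 0) := by
  have ha'a : a' ≤ a := haa'.trans_le inf_le_left
  have hm : ∀ x ∈ m, ∀ y ∈ m, ∀ z ∈ m, ⁅⁅x, y⁆, z⁆ ∈ m :=
    fun x hx y hy z hz => hkm _ (hmm x hx y hy) z hz
  refine ⟨fun lam _ hres huniq lamSharp hls hriesz => ?_,
    fun lam _ mu _ _ hlam hmu lamSharp _ hl muSharp _ hmu' Z hZ => ?_⟩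
  · obtain ⟨X, hX, hX0⟩ := (Submodule.ne_bot_iff _).mp hα.2
    have hXlam : X ∈ rootSpaceIn m a lam :=
      rootSpaceIn_le_of_forall_restrictForm_eq hkill hm ha ha'a hα.1 huniq
        (rootSpaceIn_mono hm'.1 α hX)
    exact rieszVector_mem_of_mem_rootSpaceIn hkill hm'.2 ha' ha.2.1 ha'a (hres ▸ hα.1)
      ⟨hX.1, hXlam.2⟩ hX0 hls hriesz
  · have hlamZ := LinearMap.congr_fun hlam ⟨Z, hZ⟩
    have hmuZ := LinearMap.congr_fun hmu ⟨Z, hZ⟩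
    have hlZ := hl ⟨Z, ha'a hZ⟩
    have hmZ := hmu' ⟨Z, ha'a hZ⟩
    simp only [restrictForm, LinearMap.comp_apply, Submodule.inclusion_apply] at hlamZ hmuZ
    rw [map_sub]
    linarith

/-- Proposition 2.3: (a) the Riesz vector of the unique root above an elementary root of a
Lie triple system lies in `a'`; (b) the difference of Riesz vectors of two roots restricting to
the same composite root is orthogonal to `a'` (w.r.t. `⟨X,Y⟩ = -κ(X,Y)`). -/
theorem stmt1 {L : Type} [LieRing L] [LieAlgebra ℝ L] [Module.Finite ℝ L]
    (hkill : ∀ X : L, X ≠ 0 → killingForm ℝ L X X < 0)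
    (k m : Submodule ℝ L) (hcompl : IsCompl k m)
    (hkk : ∀ x ∈ k, ∀ y ∈ k, ⁅x, y⁆ ∈ k)
    (hkm : ∀ x ∈ k, ∀ y ∈ m, ⁅x, y⁆ ∈ m)
    (hmm : ∀ x ∈ m, ∀ y ∈ m, ⁅x, y⁆ ∈ k)
    (m' : Submodule ℝ L) (hm' : IsLieTripleSystemIn m m')
    (a' a : Submodule ℝ L)
    (ha' : IsCartanSubalgebraIn m' a') (ha : IsCartanSubalgebraIn m a)
    (haa' : a' = a ⊓ m')
    (α : ↥a' →ₗ[ℝ] ℝ) (hα : α ∈ rootSystemIn m' a') :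
    (∀ lam ∈ rootSystemIn m a,
      restrictForm (haa'.trans_le inf_le_left) lam = α →
      (∀ mu ∈ rootSystemIn m a,
        restrictForm (haa'.trans_le inf_le_left) mu = α → mu = lam) →
      ∀ lamSharp ∈ a,
        (∀ Z : ↥a, -(killingForm ℝ L (Z : L) lamSharp) = lam Z) →
        lamSharp ∈ a') ∧
    (∀ lam ∈ rootSystemIn m a, ∀ mu ∈ rootSystemIn m a, lam ≠ mu →
      restrictForm (haa'.trans_le inf_le_left) lam = α →
      restrictForm (haa'.trans_le inf_le_left) mu = α →
      ∀ lamSharp ∈ a,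
        (∀ Z : ↥a, -(killingForm ℝ L (Z : L) lamSharp) = lam Z) →
      ∀ muSharp ∈ a,
        (∀ Z : ↥a, -(killingForm ℝ L (Z : L) muSharp) = mu Z) →
      ∀ Z ∈ a', -(killingForm ℝ L Z (lamSharp - muSharp)) = 0) :=
  stmt1_general hkill k m hkm hmm m' hm' a' a ha' ha haa' α hα
end

section
/- For all u, v, w ∈ m the following two matrix identities hold: ⁅ι(u), ι(v)⁆ = fromBlocks (vᴴ·u − uᴴ·v) 0 0 (v·uᴴ − u·vᴴ), and −⁅⁅ι(u), ι(v)⁆, ι(w)⁆ = ι((u·vᴴ − v·uᴴ)·w + w·(vᴴ·u − uᴴ·v)) = ι(R(u,v)w). (This realizes the curvature tensor of G₂(ℍ^{n+2}) as R(u,v)w = −⁅⁅u,v⁆,w⁆ in sp(n+2).) -/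
open Matrix

noncomputable section

/-- The quaternions. -/
abbrev ℍq : Type := Quaternion ℝ

/-- The tangent space `m` of `G₂(ℍ^{n+2})`: the `n × 2` quaternionic matrices. -/
abbrev MatH (n : ℕ) : Type := Matrix (Fin n) (Fin 2) ℍq

/-- The curvature tensor of `G₂(ℍ^{n+2})`:
`R(u,v)w = (u vᴴ − v uᴴ) w + w (vᴴ u − uᴴ v)`. -/
def Rcurv {n : ℕ} (u v w : MatH n) : MatH n :=
  (u * vᴴ - v * uᴴ) * w + w * (vᴴ * u - uᴴ * v)

/-- A subset of `m` is a Lie triple system if it is a real-linear subspace which is closed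
under the curvature tensor. -/
def IsLTS {n : ℕ} (s : Set (MatH n)) : Prop :=
  (∃ p : Submodule ℝ (MatH n), (p : Set (MatH n)) = s) ∧
    ∀ u ∈ s, ∀ v ∈ s, ∀ w ∈ s, Rcurv u v w ∈ s

/-- The first row index (row "1" in the paper's 1-based notation). -/
def r0 {n : ℕ} (hn : 2 ≤ n) : Fin n := ⟨0, by omega⟩

/-- The second row index (row "2" in the paper's 1-based notation). -/
def r1 {n : ℕ} (hn : 2 ≤ n) : Fin n := ⟨1, by omega⟩

/-- `q·E₁₁`: the matrix whose only nonzero entry is `q`, in position (1,1). -/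
def E11 {n : ℕ} (hn : 2 ≤ n) (q : ℍq) : MatH n := Matrix.single (r0 hn) 0 q

/-- `q·E₂₂`: the matrix whose only nonzero entry is `q`, in position (2,2). -/
def E22 {n : ℕ} (hn : 2 ≤ n) (q : ℍq) : MatH n := Matrix.single (r1 hn) 1 q

/-- `H₊ = E₁₁`. -/
def Hp {n : ℕ} (hn : 2 ≤ n) : MatH n := E11 hn 1

/-- `H₋ = E₂₂`. -/
def Hm {n : ℕ} (hn : 2 ≤ n) : MatH n := E22 hn 1

/-- The matrix `M_{c,ε}`: entry `(2,1)` equals `c/√2`, entry `(1,2)` equals `ε·conj(c)/√2`,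
all other entries vanish. -/
def Mce {n : ℕ} (hn : 2 ≤ n) (c : ℍq) (ε : ℝ) : MatH n :=
  Matrix.single (r1 hn) 0 ((Real.sqrt 2)⁻¹ • c) +
    Matrix.single (r0 hn) 1 ((ε * (Real.sqrt 2)⁻¹) • star c)

/-- The quaternionic inner product `⟨v,w⟩ = trace (vᴴ w)` on `m`. -/
def qip {n : ℕ} (v w : MatH n) : ℍq := Matrix.trace (vᴴ * w)

/-- The norm on `m`: `‖v‖ = √(Σ |v i j|²)`. -/
def hnorm {n : ℕ} (v : MatH n) : ℝ := Real.sqrt (∑ i, ∑ j, Quaternion.normSq (v i j))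

/-- The symplectic group `Sp(k)` of quaternionic `k × k` matrices. -/
def SpH (k : ℕ) : Set (Matrix (Fin k) (Fin k) ℍq) := {B | Bᴴ * B = 1}

/-- The `j`-th column of a matrix in `m`. -/
def col {n : ℕ} (j : Fin 2) (v : MatH n) : Fin n → ℍq := fun i => v i j

/-- The quaternionic inner product `⟨a,b⟩ = Σᵢ conj(aᵢ)·bᵢ` on `ℍⁿ`. -/
def vip {n : ℕ} (a b : Fin n → ℍq) : ℍq := ∑ i, star (a i) * b i

/-- The imaginary part `Im(q) = (q - conj q)/2` of a quaternion. -/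
def imPart (q : ℍq) : ℍq := (q - star q) / 2

/-- Componentwise right multiplication of a vector by a quaternion. -/
def rightMulV {n : ℕ} (u : Fin n → ℍq) (c : ℍq) : Fin n → ℍq := fun i => u i * c

end

noncomputable section

/-- The block embedding `ι(u) = fromBlocks 0 (−uᴴ) u 0` of `m` into `sp(n+2)`. -/
def iotaBlk {n : ℕ} (u : MatH n) : Matrix (Fin 2 ⊕ Fin n) (Fin 2 ⊕ Fin n) ℍq :=
  Matrix.fromBlocks 0 (-uᴴ) u 0

theorem Matrix.fromBlocks_sub {l m n o α : Type*} [Sub α]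
    (A : Matrix n l α) (B : Matrix n m α) (C : Matrix o l α) (D : Matrix o m α)
    (A' : Matrix n l α) (B' : Matrix n m α) (C' : Matrix o l α) (D' : Matrix o m α) :
    fromBlocks A B C D - fromBlocks A' B' C' D' = fromBlocks (A - A') (B - B') (C - C') (D - D') := by
  ext (i | i) (j | j) <;> rfl

theorem iotaBlk_neg {n : ℕ} (u : MatH n) : iotaBlk (-u) = -iotaBlk u := by
  simp [iotaBlk, fromBlocks_neg]

theorem iotaBlk_mul_iotaBlk {n : ℕ} (u v : MatH n) :
    iotaBlk u * iotaBlk v = fromBlocks (-(uᴴ * v)) 0 0 (-(u * vᴴ)) := by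
  simp [iotaBlk, fromBlocks_multiply]

theorem iotaBlk_commutator {n : ℕ} (u v : MatH n) :
    iotaBlk u * iotaBlk v - iotaBlk v * iotaBlk u =
      fromBlocks (vᴴ * u - uᴴ * v) 0 0 (v * uᴴ - u * vᴴ) := by
  simp only [iotaBlk_mul_iotaBlk, fromBlocks_sub, sub_zero, neg_sub_neg]

/- Skew-hermitian diagonal blocks are what makes the off-diagonal blocks of the commutator
again of the shape `(-xᴴ, x)`. -/
theorem fromBlocks_diagonal_commutator_iotaBlk {n : ℕ} {A : Matrix (Fin 2) (Fin 2) ℍq}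
    {D : Matrix (Fin n) (Fin n) ℍq} (hA : Aᴴ = -A) (hD : Dᴴ = -D) (w : MatH n) :
    fromBlocks A 0 0 D * iotaBlk w - iotaBlk w * fromBlocks A 0 0 D =
      iotaBlk (D * w - w * A) := by
  simp only [iotaBlk, fromBlocks_multiply, fromBlocks_sub, conjTranspose_sub,
    conjTranspose_mul, hA, hD, Matrix.mul_neg, Matrix.neg_mul, Matrix.mul_zero, Matrix.zero_mul,
    add_zero, zero_add, sub_zero, neg_zero, sub_neg_eq_add]
  congr 1
  abel

theorem stmt3_general (n : ℕ) (u v w : MatH n) :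
    iotaBlk u * iotaBlk v - iotaBlk v * iotaBlk u =
      Matrix.fromBlocks (vᴴ * u - uᴴ * v) 0 0 (v * uᴴ - u * vᴴ) ∧
    -((iotaBlk u * iotaBlk v - iotaBlk v * iotaBlk u) * iotaBlk w -
        iotaBlk w * (iotaBlk u * iotaBlk v - iotaBlk v * iotaBlk u)) =
      iotaBlk ((u * vᴴ - v * uᴴ) * w + w * (vᴴ * u - uᴴ * v)) ∧
    iotaBlk ((u * vᴴ - v * uᴴ) * w + w * (vᴴ * u - uᴴ * v)) = iotaBlk (Rcurv u v w) := by
  have hA : (vᴴ * u - uᴴ * v)ᴴ = -(vᴴ * u - uᴴ * v) := by simp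
  have hD : (v * uᴴ - u * vᴴ)ᴴ = -(v * uᴴ - u * vᴴ) := by simp
  refine ⟨iotaBlk_commutator u v, ?_, rfl⟩
  rw [iotaBlk_commutator, fromBlocks_diagonal_commutator_iotaBlk hA hD, ← iotaBlk_neg]
  congr 1
  rw [neg_sub, ← neg_sub (u * vᴴ), Matrix.neg_mul, sub_neg_eq_add, add_comm]

/-- The Lie bracket and the curvature tensor of `G₂(ℍ^{n+2})`, realized in `sp(n+2)`:
`⁅ι u, ι v⁆ = fromBlocks (vᴴu − uᴴv) 0 0 (vuᴴ − uvᴴ)` and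
`−⁅⁅ι u, ι v⁆, ι w⁆ = ι((uvᴴ − vuᴴ)w + w(vᴴu − uᴴv)) = ι(R(u,v)w)`. -/
theorem stmt3 (n : ℕ) (hn : 2 ≤ n) (u v w : MatH n) :
    iotaBlk u * iotaBlk v - iotaBlk v * iotaBlk u =
      Matrix.fromBlocks (vᴴ * u - uᴴ * v) 0 0 (v * uᴴ - u * vᴴ) ∧
    -((iotaBlk u * iotaBlk v - iotaBlk v * iotaBlk u) * iotaBlk w -
        iotaBlk w * (iotaBlk u * iotaBlk v - iotaBlk v * iotaBlk u)) =
      iotaBlk ((u * vᴴ - v * uᴴ) * w + w * (vᴴ * u - uᴴ * v)) ∧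
    iotaBlk ((u * vᴴ - v * uᴴ) * w + w * (vᴴ * u - uᴴ * v)) = iotaBlk (Rcurv u v w) :=
  stmt3_general n u v w

end
end

section
/- For every v ∈ Matrix (Fin n) (Fin 2) ℍ there exist B ∈ Sp(2) and real numbers t₁, t₂ with t₁ ≥ 0, t₂ ≥ 0 and t₁ + t₂ = ‖v‖², such that Bᴴ·(vᴴ·v)·B is the diagonal 2×2 matrix with diagonal entries t₁ and t₂ (regarded as quaternions). In particular, the self-adjoint positive semidefinite matrix vᴴ·v is real-diagonalizable with nonnegative real eigenvalues summing to ‖v‖². -/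
open Matrix

/-! Write `vᴴ v = !![a, b; star b, d]` with `a, d` real and `b = ‖b‖ u` with `u` a unit
quaternion. Conjugating by `diagonal ![1, star u]` turns it into the real symmetric matrix
`!![a, ‖b‖; ‖b‖, d]`, which the real spectral theorem diagonalizes; real matrices sit inside
quaternionic ones compatibly with `ᴴ`. The resulting eigenvalues are the diagonal entries of the
Gram matrix `(v B)ᴴ (v B)`, hence nonnegative, and they add up to the trace `a + d = ‖v‖²`. -/

instance Quaternion.instStarModule {R : Type*} [CommRing R] [StarRing R] [TrivialStar R] :
    StarModule R (Quaternion R) :=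
  ⟨fun r a => by rw [Quaternion.star_smul, star_trivial r]⟩

theorem Matrix.conjTranspose_map_algebraMap {A : Type*} [Semiring A] [StarMul A] [Algebra ℝ A]
    [StarModule ℝ A] {m n : Type*} (M : Matrix m n ℝ) :
    (M.map (algebraMap ℝ A))ᴴ = Mᴴ.map (algebraMap ℝ A) :=
  (conjTranspose_map _ fun r => algebraMap_star_comm r).symm

namespace Matrix.IsHermitian

variable {ι : Type*} [Fintype ι] [DecidableEq ι] {M : Matrix ι ι ℝ}

theorem exists_conjTranspose_mul_mul_eq_diagonal (hM : M.IsHermitian) :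
    ∃ R : Matrix ι ι ℝ, Rᴴ * R = 1 ∧ ∃ t : ι → ℝ, ∑ i, t i = M.trace ∧ Rᴴ * M * R = diagonal t :=
  ⟨hM.eigenvectorUnitary, Unitary.coe_star_mul_self hM.eigenvectorUnitary, hM.eigenvalues,
    by simpa using hM.trace_eq_sum_eigenvalues.symm,
    by simpa [star_eq_conjTranspose] using hM.conjStarAlgAut_star_eigenvectorUnitary⟩

theorem exists_conjTranspose_mul_map_mul_eq_diagonal {A : Type*} [Ring A] [StarRing A]
    [Algebra ℝ A] [StarModule ℝ A] (hM : M.IsHermitian) :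
    ∃ R : Matrix ι ι A, Rᴴ * R = 1 ∧ ∃ t : ι → ℝ, ∑ i, t i = M.trace ∧
      Rᴴ * M.map (algebraMap ℝ A) * R = diagonal fun i => algebraMap ℝ A (t i) := by
  obtain ⟨R, hR, t, ht, hRt⟩ := hM.exists_conjTranspose_mul_mul_eq_diagonal
  refine ⟨R.map (algebraMap ℝ A), ?_, t, ht, ?_⟩
  · rw [conjTranspose_map_algebraMap, ← Matrix.map_mul, hR,
      Matrix.map_one _ (map_zero _) (map_one _)]
  · rw [conjTranspose_map_algebraMap, ← Matrix.map_mul, ← Matrix.map_mul, hRt,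
      diagonal_map (map_zero _)]

end Matrix.IsHermitian

namespace Quaternion

theorem exists_mem_unitary_eq_norm_smul (b : ℍq) : ∃ u ∈ unitary ℍq, b = ‖b‖ • u := by
  rcases eq_or_ne b 0 with rfl | hb
  · exact ⟨1, one_mem _, by simp⟩
  have hb' : ‖b‖ ≠ 0 := norm_ne_zero_iff.2 hb
  refine ⟨‖b‖⁻¹ • b, Unitary.mem_iff.2 ⟨?_, ?_⟩, by rw [smul_smul, mul_inv_cancel₀ hb', one_smul]⟩
  all_goals
    rw [star_smul, smul_mul_smul, ← coe_one]
    simp only [star_mul_self, self_mul_star]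
    rw [normSq_eq_norm_mul_self, smul_coe, coe_inj]
    field_simp

theorem exists_conjTranspose_mul_mul_eq_diagonal_fin_two (a d : ℝ) (b : ℍq) :
    ∃ B : Matrix (Fin 2) (Fin 2) ℍq, Bᴴ * B = 1 ∧ ∃ t : Fin 2 → ℝ, t 0 + t 1 = a + d ∧
      Bᴴ * !![(a : ℍq), b; star b, (d : ℍq)] * B = diagonal fun i => (t i : ℍq) := by
  set A : Matrix (Fin 2) (Fin 2) ℍq := !![(a : ℍq), b; star b, (d : ℍq)]
  obtain ⟨u, hu, hb⟩ := exists_mem_unitary_eq_norm_smul b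
  generalize ‖b‖ = β at hb
  subst hb
  let M : Matrix (Fin 2) (Fin 2) ℝ := !![a, β; β, d]
  have hM : M.IsHermitian := by
    refine Matrix.ext fun i j => ?_
    fin_cases i <;> fin_cases j <;> rfl
  let U : Matrix (Fin 2) (Fin 2) ℍq := diagonal ![1, star u]
  have hU : Uᴴ * U = 1 := by
    refine Matrix.ext fun i j => ?_
    fin_cases i <;> fin_cases j <;> simp [U, Unitary.mul_star_self_of_mem hu]
  have hUA : Uᴴ * A * U = M.map (algebraMap ℝ ℍq) := by
    refine Matrix.ext fun i j => ?_
    fin_cases i <;> fin_cases j <;>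
      simp [A, U, M, diagonal_mul, mul_diagonal, mul_coe_eq_smul,
        ← Algebra.algebraMap_eq_smul_one, algebraMap_def, Unitary.mul_star_self_of_mem hu]
  obtain ⟨R, hR, t, ht, hRt⟩ := hM.exists_conjTranspose_mul_map_mul_eq_diagonal (A := ℍq)
  refine ⟨U * R, ?_, t, by simpa [M, trace_fin_two] using ht, ?_⟩
  · calc (U * R)ᴴ * (U * R) = Rᴴ * (Uᴴ * U) * R := by
          simp only [conjTranspose_mul, Matrix.mul_assoc]
      _ = 1 := by rw [hU, Matrix.mul_one, hR]
  · calc (U * R)ᴴ * A * (U * R) = Rᴴ * (Uᴴ * A * U) * R := by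
          simp only [conjTranspose_mul, Matrix.mul_assoc]
      _ = _ := by rw [hUA, hRt, algebraMap_def]

variable {m n : Type*} [Fintype m]

theorem conjTranspose_mul_self_apply_self (w : Matrix m n ℍq) (j : n) :
    (wᴴ * w) j j = ((∑ k, normSq (w k j) : ℝ) : ℍq) := by
  simp [Matrix.mul_apply, star_mul_self, ← algebraMap_def, map_sum]

theorem nonneg_of_conjTranspose_mul_self_eq_diagonal [DecidableEq n] {w : Matrix m n ℍq}
    {t : n → ℝ} (h : wᴴ * w = diagonal fun i => (t i : ℍq)) (j : n) : 0 ≤ t j := by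
  have hj := congr_fun (congr_fun h j) j
  rw [conjTranspose_mul_self_apply_self, diagonal_apply_eq, coe_inj] at hj
  exact hj ▸ Finset.sum_nonneg fun _ _ => normSq_nonneg

end Quaternion

theorem stmt6_general (n : ℕ) (v : MatH n) :
    ∃ B ∈ SpH 2, ∃ t₁ t₂ : ℝ, 0 ≤ t₁ ∧ 0 ≤ t₂ ∧
      t₁ + t₂ = ∑ i, ∑ j, Quaternion.normSq (v i j) ∧
      Bᴴ * (vᴴ * v) * B = Matrix.diagonal ![(t₁ : ℍq), (t₂ : ℍq)] := by
  have hA : vᴴ * v = !![((∑ k, Quaternion.normSq (v k 0) : ℝ) : ℍq), (vᴴ * v) 0 1;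
      star ((vᴴ * v) 0 1), ((∑ k, Quaternion.normSq (v k 1) : ℝ) : ℍq)] := by
    refine Matrix.ext fun i j => ?_
    fin_cases i <;> fin_cases j <;>
      simp [Quaternion.conjTranspose_mul_self_apply_self,
        ← (isHermitian_conjTranspose_mul_self v).apply 1 0]
  obtain ⟨B, hB, t, ht, hBt⟩ :=
    Quaternion.exists_conjTranspose_mul_mul_eq_diagonal_fin_two _ _ ((vᴴ * v) 0 1)
  rw [← hA] at hBt
  have hGram : (v * B)ᴴ * (v * B) = diagonal fun i => (t i : ℍq) := by
    rw [← hBt]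
    simp only [conjTranspose_mul, Matrix.mul_assoc]
  refine ⟨B, hB, t 0, t 1, Quaternion.nonneg_of_conjTranspose_mul_self_eq_diagonal hGram 0,
    Quaternion.nonneg_of_conjTranspose_mul_self_eq_diagonal hGram 1, ?_, ?_⟩
  · rw [ht, ← Finset.sum_add_distrib]
    simp [Fin.sum_univ_two]
  · rw [hBt]
    congr 1
    funext i
    fin_cases i <;> rfl

/-- Proposition 4.1(a): for `v ∈ m`, the self-adjoint positive semidefinite endomorphism
`vᴴv` of `ℍ²` is symplectically diagonalizable with nonnegative real eigenvalues `t₁, t₂`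
satisfying `t₁ + t₂ = ‖v‖²`. -/
theorem stmt6 (n : ℕ) (hn : 2 ≤ n) (v : MatH n) :
    ∃ B ∈ SpH 2, ∃ t₁ t₂ : ℝ, 0 ≤ t₁ ∧ 0 ≤ t₂ ∧
      t₁ + t₂ = ∑ i, ∑ j, Quaternion.normSq (v i j) ∧
      Bᴴ * (vᴴ * v) * B = Matrix.diagonal ![(t₁ : ℍq), (t₂ : ℍq)] :=
  stmt6_general n v
end

section
/- For every v ∈ m with v ≠ 0 there exist an angle φ ∈ [0, π/4], a matrix A ∈ Sp(2) with A·A = 1 and A ≠ ±1, and matrices H₊, H₋ ∈ m with H₊·A = H₊, H₋·A = −H₋, ‖H₊‖ = ‖H₋‖ = 1 and H₊ᴴ·H₋ = 0, such that v = ‖v‖·(cos(φ)·H₊ + sin(φ)·H₋). (This is the canonical representation of v; φ is the characteristic angle of v.) -/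
open Matrix

noncomputable section

/-! Write the Hermitian matrix `vᴴ v ∈ ℍ^{2×2}` as `t • 1 + T` with `T` traceless Hermitian.
Then `T * T = ρ² • 1`, so `A = ρ⁻¹ • T` (or `diag(1, -1)` when `T = 0`) is a Hermitian involution
commuting with `vᴴ v`, and `A ≠ ±1` since `tr A = 0`. Right multiplication by `A` splits
`v = P + M` into the eigenparts `P = (v + v A)/2`, `M = (v - v A)/2`; commutation gives
`Pᴴ M = 0`, hence `‖v‖² = ‖P‖² + ‖M‖²`. After replacing `A` by `-A` we have `‖M‖ ≤ ‖P‖`, and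
take `φ = arctan (‖M‖ / ‖P‖)`, `H₊ = P / ‖P‖`, `H₋ = M / ‖M‖`. When `M = 0`, `v (1 - A) = 0`
confines the rows of `v` to a proper subspace of `ℍ²`, so for `n ≥ 2` some `x ≠ 0` has
`x ᵥ* v = 0`, and `H₋` is a normalised `x̄ fᵀ` with `f` a nonzero row of `1 - A`. -/

instance {R : Type*} [CommRing R] [StarRing R] [TrivialStar R] : StarModule R (Quaternion R) :=
  ⟨fun r a => by rw [Quaternion.star_smul, star_trivial r]⟩

instance {R : Type*} [CommRing R] [CharZero R] : CharZero (Quaternion R) :=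
  charZero_of_injective_algebraMap <| by
    rw [Quaternion.algebraMap_def]
    exact Quaternion.coe_injective

theorem Matrix.ne_one_and_ne_neg_one_of_trace_eq_zero {R m : Type*} [Ring R] [CharZero R]
    [Fintype m] [DecidableEq m] [Nonempty m] {A : Matrix m m R} (hA : A.trace = 0) :
    A ≠ 1 ∧ A ≠ -1 := by
  constructor <;> rintro rfl <;> simp [Fintype.card_ne_zero] at hA

theorem Matrix.exists_ne_zero_vecMul_eq_zero {K m p q : Type*} [DivisionRing K] [Fintype m]
    [Fintype p] (v : Matrix m p K) {B : Matrix p q K} (hvB : v * B = 0) (hB : B ≠ 0)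
    (hcard : Fintype.card p ≤ Fintype.card m) : ∃ x : m → K, x ≠ 0 ∧ x ᵥ* v = 0 := by
  classical
  have hker : LinearMap.ker B.vecMulLinear ≠ ⊤ := by
    intro h
    refine hB (Matrix.ext fun i j => ?_)
    have := congrFun (LinearMap.congr_fun (LinearMap.ker_eq_top.mp h) (Pi.single i 1)) j
    simpa [Matrix.single_one_vecMul] using this
  let f : (m → K) →ₗ[K] LinearMap.ker B.vecMulLinear :=
    v.vecMulLinear.codRestrict _ fun x => by simp [Matrix.vecMul_vecMul, hvB]
  have hf : LinearMap.ker f ≠ ⊥ := LinearMap.ker_ne_bot_of_finrank_lt <| by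
    calc Module.finrank K (LinearMap.ker B.vecMulLinear) < Module.finrank K (p → K) :=
          Submodule.finrank_lt hker
      _ ≤ Module.finrank K (m → K) := by simpa [Module.finrank_fintype_fun_eq_card] using hcard
  obtain ⟨x, hx, hx0⟩ := (Submodule.ne_bot_iff _).mp hf
  exact ⟨x, hx0, congrArg Subtype.val hx⟩

open Real in
theorem exists_polar_angle_le_pi_div_four {α β : ℝ} (hβ : 0 ≤ β) (hβα : β ≤ α) :
    ∃ φ, 0 ≤ φ ∧ φ ≤ π / 4 ∧ α = √(α ^ 2 + β ^ 2) * cos φ ∧ β = √(α ^ 2 + β ^ 2) * sin φ := by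
  rcases (hβ.trans hβα).eq_or_lt with hα | hα
  · obtain rfl : β = 0 := le_antisymm (hα ▸ hβα) hβ
    exact ⟨0, le_rfl, by positivity, by simp [← hα], by simp⟩
  have hsqrt : √(1 + (β / α) ^ 2) = √(α ^ 2 + β ^ 2) / α := by
    rw [show 1 + (β / α) ^ 2 = (α ^ 2 + β ^ 2) / α ^ 2 by field_simp,
      sqrt_div' _ (sq_nonneg α), sqrt_sq hα.le]
  have hr : 0 < √(α ^ 2 + β ^ 2) := sqrt_pos.mpr (by positivity)
  refine ⟨arctan (β / α), arctan_nonneg.mpr (div_nonneg hβ hα.le), ?_, ?_, ?_⟩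
  · rw [← arctan_one]
    exact arctan_mono ((div_le_one hα).mpr hβα)
  · rw [cos_arctan, hsqrt]
    field_simp
  · rw [sin_arctan, hsqrt]
    field_simp

section hnorm

variable {n : ℕ}

theorem hnorm_nonneg (x : MatH n) : 0 ≤ hnorm x := Real.sqrt_nonneg _

@[simp] theorem hnorm_zero : hnorm (0 : MatH n) = 0 := by simp [hnorm]

section Frobenius

attribute [local instance] Matrix.frobeniusNormedAddCommGroup Matrix.frobeniusNormedSpace

theorem hnorm_eq_norm (x : MatH n) : hnorm x = ‖x‖ := by
  simp only [hnorm, Matrix.frobenius_norm_def, Real.rpow_two, Quaternion.normSq_eq_norm_mul_self,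
    ← sq, Real.sqrt_eq_rpow]

theorem hnorm_smul (r : ℝ) (x : MatH n) : hnorm (r • x) = |r| * hnorm x := by
  simp only [hnorm_eq_norm, norm_smul, Real.norm_eq_abs]

theorem hnorm_pos {x : MatH n} (hx : x ≠ 0) : 0 < hnorm x := by
  rw [hnorm_eq_norm]
  exact norm_pos_iff.mpr hx

end Frobenius

theorem hnorm_inv_smul_self {x : MatH n} (hx : x ≠ 0) : hnorm ((hnorm x)⁻¹ • x) = 1 := by
  rw [hnorm_smul, abs_inv, abs_of_pos (hnorm_pos hx), inv_mul_cancel₀ (hnorm_pos hx).ne']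

theorem trace_conjTranspose_mul_self (x : MatH n) :
    Matrix.trace (xᴴ * x) = ((hnorm x ^ 2 : ℝ) : ℍq) := by
  have h0 : 0 ≤ ∑ i, ∑ j, Quaternion.normSq (x i j) :=
    Finset.sum_nonneg fun i _ => Finset.sum_nonneg fun j _ => Quaternion.normSq_nonneg
  rw [hnorm, Real.sq_sqrt h0, Matrix.trace, Finset.sum_comm, ← Quaternion.algebraMap_def]
  simp only [Matrix.diag_apply, Matrix.mul_apply, Matrix.conjTranspose_apply,
    Quaternion.star_mul_self, map_sum, Quaternion.algebraMap_def]

theorem sq_hnorm_add_of_conjTranspose_mul_eq_zero {x y : MatH n} (h : xᴴ * y = 0) :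
    hnorm (x + y) ^ 2 = hnorm x ^ 2 + hnorm y ^ 2 := by
  have h' : yᴴ * x = 0 := by simpa using congrArg Matrix.conjTranspose h
  have := trace_conjTranspose_mul_self (x + y)
  rw [Matrix.conjTranspose_add, Matrix.add_mul, Matrix.mul_add, Matrix.mul_add, h, h', add_zero,
    zero_add, Matrix.trace_add, trace_conjTranspose_mul_self, trace_conjTranspose_mul_self] at this
  rwa [← Quaternion.coe_add, Quaternion.coe_inj, eq_comm] at this

end hnorm

section Involution

open Quaternion

theorem traceless_mul_self (d : ℝ) (b : ℍq) :
    !![(d : ℍq), b; star b, -(d : ℍq)] * !![(d : ℍq), b; star b, -(d : ℍq)] =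
      (d ^ 2 + normSq b) • (1 : Matrix (Fin 2) (Fin 2) ℍq) := by
  refine Matrix.ext fun i j => ?_
  fin_cases i <;> fin_cases j <;>
    simp [Matrix.mul_apply, Fin.sum_univ_two, self_mul_star, star_mul_self, ← coe_mul_eq_smul, sq,
      coe_commutes, add_comm]

theorem exists_eq_smul_one_add_traceless {S : Matrix (Fin 2) (Fin 2) ℍq} (hS : S.IsHermitian) :
    ∃ t d : ℝ, S = t • 1 + !![(d : ℍq), S 0 1; star (S 0 1), -(d : ℍq)] := by
  have hdiag : ∀ i, S i i = ((S i i).re : ℍq) := fun i =>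
    star_eq_self.mp (by simpa using congrFun (congrFun hS i) i)
  refine ⟨((S 0 0).re + (S 1 1).re) / 2, ((S 0 0).re - (S 1 1).re) / 2, Matrix.ext fun i j => ?_⟩
  fin_cases i <;> fin_cases j
  · conv_lhs => rw [hdiag]
    simp only [Fin.zero_eta, Fin.isValue, Matrix.add_apply, Matrix.smul_apply, Matrix.one_apply_eq,
      ← coe_mul_eq_smul, mul_one, Matrix.of_apply, Matrix.cons_val', Matrix.cons_val_zero,
      Matrix.cons_val_fin_one, ← coe_add, coe_inj]
    ring
  · simp
  · simp [← hS.apply 0 1]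
  · conv_lhs => rw [hdiag]
    simp only [Fin.mk_one, Fin.isValue, Matrix.add_apply, Matrix.smul_apply, Matrix.one_apply_eq,
      ← coe_mul_eq_smul, mul_one, Matrix.of_apply, Matrix.cons_val', Matrix.cons_val_one,
      Matrix.cons_val_fin_one, ← coe_neg, ← coe_add, coe_inj]
    ring

theorem exists_involution_commute {S : Matrix (Fin 2) (Fin 2) ℍq} (hS : S.IsHermitian) :
    ∃ A : Matrix (Fin 2) (Fin 2) ℍq, A.IsHermitian ∧ A * A = 1 ∧ Commute S A ∧ A.trace = 0 := by
  obtain ⟨t, d, hSt⟩ := exists_eq_smul_one_add_traceless hS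
  set T : Matrix (Fin 2) (Fin 2) ℍq := !![(d : ℍq), S 0 1; star (S 0 1), -(d : ℍq)]
  have hscalar : ∀ A, Commute (t • (1 : Matrix (Fin 2) (Fin 2) ℍq)) A :=
    fun A => (Commute.one_left A).smul_left t
  by_cases hT : d ^ 2 + normSq (S 0 1) = 0
  · have hd : d = 0 := by nlinarith [normSq_nonneg (a := S 0 1)]
    have hb : S 0 1 = 0 := normSq_eq_zero.mp (by nlinarith [normSq_nonneg (a := S 0 1)])
    have hT0 : T = 0 := by
      ext i j : 1
      fin_cases i <;> fin_cases j <;> simp [T, hd, hb]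
    refine ⟨!![1, 0; 0, -1], ?_, ?_, by rw [hSt, hT0, add_zero]; exact hscalar _, by simp⟩
    · ext i j : 1
      fin_cases i <;> fin_cases j <;> simp
    · ext i j : 1
      fin_cases i <;> fin_cases j <;> simp [Matrix.mul_apply]
  · set ρ := √(d ^ 2 + normSq (S 0 1))
    have hρ : ρ ^ 2 = d ^ 2 + normSq (S 0 1) :=
      Real.sq_sqrt (add_nonneg (sq_nonneg d) normSq_nonneg)
    have hρ0 : ρ ≠ 0 := fun h => hT (by rw [← hρ, h, sq, zero_mul])
    refine ⟨ρ⁻¹ • T, ?_, ?_, ?_, by simp [T]⟩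
    · ext i j : 1
      fin_cases i <;> fin_cases j <;> simp [T]
    · rw [Matrix.smul_mul, Matrix.mul_smul, traceless_mul_self, smul_smul, smul_smul, ← hρ,
        show ρ⁻¹ * ρ⁻¹ * ρ ^ 2 = 1 by field_simp, one_smul]
    · rw [hSt]
      exact ((hscalar T).add_left (Commute.refl T)).smul_right _

end Involution

def plusPart {n : ℕ} (A : Matrix (Fin 2) (Fin 2) ℍq) (v : MatH n) : MatH n :=
  (2 : ℝ)⁻¹ • (v + v * A)

section plusPart

variable {n : ℕ} {A : Matrix (Fin 2) (Fin 2) ℍq} (v : MatH n)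

theorem plusPart_mul (hA : A * A = 1) : plusPart A v * A = plusPart A v := by
  rw [plusPart, Matrix.smul_mul, Matrix.add_mul, Matrix.mul_assoc, hA, Matrix.mul_one, add_comm]

theorem plusPart_add_plusPart_neg : plusPart A v + plusPart (-A) v = v := by
  simp only [plusPart, Matrix.mul_neg]
  module

theorem conjTranspose_plusPart_mul_plusPart_neg (hAh : A.IsHermitian) (hA : A * A = 1)
    (hvA : Commute (vᴴ * v) A) : (plusPart A v)ᴴ * plusPart (-A) v = 0 := by
  have hAv : A * vᴴ * v = vᴴ * v * A := by rw [Matrix.mul_assoc]; exact hvA.eq.symm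
  have key : (vᴴ + A * vᴴ) * (v + v * -A) = 0 := by
    simp only [Matrix.add_mul, Matrix.mul_add, Matrix.mul_neg, ← Matrix.mul_assoc, hAv]
    rw [Matrix.mul_assoc (vᴴ * v), hA, Matrix.mul_one]
    abel
  rw [plusPart, plusPart, Matrix.conjTranspose_smul, star_trivial, Matrix.conjTranspose_add,
    Matrix.conjTranspose_mul, hAh.eq, Matrix.smul_mul, Matrix.mul_smul, key, smul_zero, smul_zero]

end plusPart

theorem exists_hnorm_eq_one_mul_eq_neg_of_mul_eq_self {n : ℕ} (hn : 2 ≤ n)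
    {A : Matrix (Fin 2) (Fin 2) ℍq} (hA : A * A = 1) (hA1 : A ≠ 1) {P : MatH n}
    (hPA : P * A = P) : ∃ H : MatH n, H * A = -H ∧ hnorm H = 1 ∧ Pᴴ * H = 0 := by
  set B : Matrix (Fin 2) (Fin 2) ℍq := 1 - A
  have hB : B ≠ 0 := sub_ne_zero.mpr hA1.symm
  have hBA : B * A = -B := by simp only [B, Matrix.sub_mul, hA, Matrix.one_mul, neg_sub]
  have hPB : P * B = 0 := by simp only [B, Matrix.mul_sub, hPA, Matrix.mul_one, sub_self]
  obtain ⟨x, hx0, hxP⟩ := P.exists_ne_zero_vecMul_eq_zero hPB hB (by simpa using hn)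
  obtain ⟨r, hr⟩ : ∃ r, B r ≠ 0 := by
    by_contra! h
    exact hB (funext h)
  set H : MatH n := Matrix.vecMulVec (star x) (B r)
  have hH0 : H ≠ 0 := by
    obtain ⟨i, hi⟩ := Function.ne_iff.mp hx0
    obtain ⟨j, hj⟩ := Function.ne_iff.mp hr
    exact fun h => mul_ne_zero (star_ne_zero.mpr hi) hj (congrFun (congrFun h i) j)
  have hHA : H * A = -H := by
    rw [Matrix.vecMulVec_mul, ← Matrix.mul_apply_eq_vecMul, hBA]
    exact Matrix.vecMulVec_neg _ _
  have hPH : Pᴴ * H = 0 := by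
    rw [Matrix.mul_vecMulVec, ← Matrix.star_vecMul, hxP, star_zero, Matrix.zero_vecMulVec]
  exact ⟨(hnorm H)⁻¹ • H, by rw [Matrix.smul_mul, hHA, smul_neg], hnorm_inv_smul_self hH0,
    by rw [Matrix.mul_smul, hPH, smul_zero]⟩

theorem exists_canonical_of_involution {n : ℕ} (hn : 2 ≤ n) {v : MatH n} (hv : v ≠ 0)
    {A : Matrix (Fin 2) (Fin 2) ℍq} (hAh : A.IsHermitian) (hA : A * A = 1) (hA1 : A ≠ 1)
    (hvA : Commute (vᴴ * v) A) (hle : hnorm (plusPart (-A) v) ≤ hnorm (plusPart A v)) :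
    ∃ φ : ℝ, 0 ≤ φ ∧ φ ≤ Real.pi / 4 ∧
      ∃ Hplus Hminus : MatH n,
        Hplus * A = Hplus ∧ Hminus * A = -Hminus ∧
        hnorm Hplus = 1 ∧ hnorm Hminus = 1 ∧ Hplusᴴ * Hminus = 0 ∧
        v = hnorm v • (Real.cos φ • Hplus + Real.sin φ • Hminus) := by
  set P := plusPart A v
  set M := plusPart (-A) v
  have hPA : P * A = P := plusPart_mul v hA
  have hMA : M * A = -M := by
    rw [← neg_neg (M * A), ← Matrix.mul_neg, plusPart_mul v (by rwa [neg_mul_neg])]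
  have hPM : Pᴴ * M = 0 := conjTranspose_plusPart_mul_plusPart_neg v hAh hA hvA
  have hsum : P + M = v := plusPart_add_plusPart_neg v
  have hP0 : P ≠ 0 := by
    rintro hP
    have hM : M = 0 := by
      by_contra hM
      exact (hnorm_pos hM).not_ge (by simpa [hP] using hle)
    exact hv (by rw [← hsum, hP, hM, add_zero])
  have hpyth : hnorm v = √(hnorm P ^ 2 + hnorm M ^ 2) := by
    rw [← sq_hnorm_add_of_conjTranspose_mul_eq_zero hPM, hsum, Real.sqrt_sq (hnorm_nonneg v)]
  obtain ⟨φ, hφ0, hφ, hcos, hsin⟩ := exists_polar_angle_le_pi_div_four (hnorm_nonneg M) hle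
  rw [← hpyth] at hcos hsin
  obtain ⟨Hminus, hHA, hH1, hPH, hMH⟩ : ∃ H : MatH n,
      H * A = -H ∧ hnorm H = 1 ∧ Pᴴ * H = 0 ∧ M = hnorm M • H := by
    by_cases hM : M = 0
    · obtain ⟨H, hHA, hH1, hPH⟩ := exists_hnorm_eq_one_mul_eq_neg_of_mul_eq_self hn hA hA1 hPA
      exact ⟨H, hHA, hH1, hPH, by simp [hM]⟩
    · refine ⟨(hnorm M)⁻¹ • M, by rw [Matrix.smul_mul, hMA, smul_neg], hnorm_inv_smul_self hM,
        by rw [Matrix.mul_smul, hPM, smul_zero], ?_⟩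
      rw [smul_inv_smul₀ (hnorm_pos hM).ne']
  refine ⟨φ, hφ0, hφ, (hnorm P)⁻¹ • P, Hminus, by rw [Matrix.smul_mul, hPA], hHA,
    hnorm_inv_smul_self hP0, hH1,
    by rw [Matrix.conjTranspose_smul, Matrix.smul_mul, hPH, smul_zero], ?_⟩
  calc v = hnorm P • (hnorm P)⁻¹ • P + hnorm M • Hminus := by
        rw [smul_inv_smul₀ (hnorm_pos hP0).ne', ← hMH, hsum]
    _ = (hnorm v * Real.cos φ) • (hnorm P)⁻¹ • P + (hnorm v * Real.sin φ) • Hminus := by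
        rw [← hcos, ← hsin]
    _ = hnorm v • (Real.cos φ • (hnorm P)⁻¹ • P + Real.sin φ • Hminus) := by
        module

/-- Proposition 4.1(b): canonical representation
`v = ‖v‖·(cos(φ)·H₊ + sin(φ)·H₋)` of a nonzero tangent vector of `G₂(ℍ^{n+2})`,
where `φ ∈ [0, π/4]` is the characteristic angle of `v`. -/
theorem stmt7 (n : ℕ) (hn : 2 ≤ n) (v : MatH n) (hv : v ≠ 0) :
    ∃ φ : ℝ, 0 ≤ φ ∧ φ ≤ Real.pi / 4 ∧
      ∃ A : Matrix (Fin 2) (Fin 2) ℍq, A ∈ SpH 2 ∧ A * A = 1 ∧ A ≠ 1 ∧ A ≠ -1 ∧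
        ∃ Hplus Hminus : MatH n,
          Hplus * A = Hplus ∧ Hminus * A = -Hminus ∧
          hnorm Hplus = 1 ∧ hnorm Hminus = 1 ∧ Hplusᴴ * Hminus = 0 ∧
          v = hnorm v • (Real.cos φ • Hplus + Real.sin φ • Hminus) := by
  obtain ⟨A, hAh, hA, hvA, htr⟩ :=
    exists_involution_commute (Matrix.isHermitian_conjTranspose_mul_self v)
  obtain ⟨hA1, hAm1⟩ := Matrix.ne_one_and_ne_neg_one_of_trace_eq_zero htr
  obtain ⟨B, hBh, hB, hvB, hB1, hBm1, hle⟩ : ∃ B : Matrix (Fin 2) (Fin 2) ℍq,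
      B.IsHermitian ∧ B * B = 1 ∧ Commute (vᴴ * v) B ∧ B ≠ 1 ∧ B ≠ -1 ∧
        hnorm (plusPart (-B) v) ≤ hnorm (plusPart B v) := by
    rcases le_total (hnorm (plusPart (-A) v)) (hnorm (plusPart A v)) with hle | hle
    · exact ⟨A, hAh, hA, hvA, hA1, hAm1, hle⟩
    · exact ⟨-A, hAh.neg, by rw [neg_mul_neg, hA], hvA.neg_right,
        fun h => hAm1 (neg_eq_iff_eq_neg.mp h), fun h => hA1 (neg_inj.mp h), by rwa [neg_neg]⟩
  obtain ⟨φ, hφ0, hφ, hrep⟩ := exists_canonical_of_involution hn hv hBh hB hB1 hvB hle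
  exact ⟨φ, hφ0, hφ, B, show Bᴴ * B = 1 by rw [hBh.eq, hB], hB, hB1, hBm1, hrep⟩

end
end

section
/- Let v, ṽ ∈ Matrix (Fin n) (Fin 2) ℍ with ‖v‖ = ‖ṽ‖ = 1. Then there exist B₁ ∈ Sp(2) and B₂ ∈ Sp(n) with ṽ = B₂·v·B₁ᴴ if and only if there exists B ∈ Sp(2) with ṽᴴ·ṽ = B·(vᴴ·v)·Bᴴ. (Hence the orbits of the isotropy action of Sp(2) × Sp(n) on the unit sphere of m are exactly the sets of unit vectors with a fixed characteristic angle.) -/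
open Matrix

/-!
Two matrices `v, w ∈ Mat(n × k, ℍ)` with the same Gram matrix `vᴴv = wᴴw` differ by a factor
in `Sp(n)`. The columns are matched one at a time: if the columns matched so far agree and the
next ones are `a ≠ b` with `⟨a,a⟩ = ⟨b,b⟩`, put `x = a - b` and `q = ⟨x,a⟩`. Then
`⟨x,x⟩ = q + q̄ ≠ 0`, which makes the quaternionic Householder map `y ↦ y - x q⁻¹ ⟨x,y⟩`
unitary; it sends `a` to `b` and fixes every vector orthogonal to `x`, in particular the columns
already matched. Only the anisotropy of the hermitian form enters, so this works over any
division ring with such an involution. The theorem is the case `k = 2`, applied to `v Bᴴ` and `w`.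
-/

namespace Matrix

variable {R n : Type*} [Fintype n]

section StarRing

variable [Ring R] [StarRing R]

theorem star_sub_dotProduct_sub_eq {a b : n → R} (hab : star a ⬝ᵥ a = star b ⬝ᵥ b) :
    star (a - b) ⬝ᵥ (a - b) = star (a - b) ⬝ᵥ a + star (star (a - b) ⬝ᵥ a) := by
  rw [← star_dotProduct]
  simp only [star_sub, sub_dotProduct, dotProduct_sub, hab]
  abel

variable [DecidableEq n]

def householder (x : n → R) (τ : R) : Matrix n n R :=
  1 - vecMulVec x (τ • star x)

theorem householder_mulVec (x y : n → R) (τ : R) :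
    householder x τ *ᵥ y = y - MulOpposite.op (τ * (star x ⬝ᵥ y)) • x := by
  rw [householder, sub_mulVec, one_mulVec, vecMulVec_mulVec, smul_dotProduct, smul_eq_mul]

theorem conjTranspose_householder_mul_self {x : n → R} {τ : R}
    (hτ : star τ + τ = star τ * (star x ⬝ᵥ x) * τ) :
    (householder x τ)ᴴ * householder x τ = 1 := by
  have h : (householder x τ)ᴴ = 1 - vecMulVec x (star τ • star x) := by
    rw [householder, conjTranspose_sub, conjTranspose_one, conjTranspose_vecMulVec, vecMulVec_smul']
    congr 2
    ext i
    simp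
  rw [h, householder]
  simp only [sub_mul, mul_sub, one_mul, mul_one, vecMulVec_mul_vecMulVec, smul_dotProduct]
  rw [smul_smul, smul_eq_mul, ← hτ, add_smul, vecMulVec_add]
  abel

theorem star_mulVec_dotProduct_mulVec {U : Matrix n n R} (hU : Uᴴ * U = 1) (x y : n → R) :
    star (U *ᵥ x) ⬝ᵥ (U *ᵥ y) = star x ⬝ᵥ y := by
  rw [star_mulVec, dotProduct_mulVec, vecMul_vecMul, hU, vecMul_one]

end StarRing

section DivisionRing

variable [DivisionRing R] [StarRing R] [DecidableEq n]

theorem exists_unitary_mulVec_eq (hR : ∀ x : n → R, star x ⬝ᵥ x = 0 → x = 0) {a b : n → R}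
    (hab : star a ⬝ᵥ a = star b ⬝ᵥ b) :
    ∃ U : Matrix n n R, Uᴴ * U = 1 ∧ U *ᵥ a = b ∧ ∀ y, star (a - b) ⬝ᵥ y = 0 → U *ᵥ y = y := by
  by_cases hne : a = b
  · exact ⟨1, by simp, by simp [hne], by simp⟩
  set q := star (a - b) ⬝ᵥ a
  have hs : star (a - b) ⬝ᵥ (a - b) = q + star q := star_sub_dotProduct_sub_eq hab
  have hq : q ≠ 0 := fun hq =>
    hne (sub_eq_zero.mp (hR _ (by rw [hs, hq, star_zero, add_zero])))
  refine ⟨householder (a - b) q⁻¹, conjTranspose_householder_mul_self ?_, ?_, fun y hy => ?_⟩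
  · rw [hs, mul_add, add_mul, mul_assoc _ q, mul_inv_cancel₀ hq, mul_one, ← star_mul,
      mul_inv_cancel₀ hq, star_one, one_mul, add_comm]
  · rw [householder_mulVec, inv_mul_cancel₀ hq, MulOpposite.op_one, one_smul, sub_sub_cancel]
  · rw [householder_mulVec, hy, mul_zero, MulOpposite.op_zero, zero_smul, sub_zero]

theorem exists_unitary_mul_eq_of_conjTranspose_mul_self_eq {k : Type*} [Fintype k]
    (hR : ∀ x : n → R, star x ⬝ᵥ x = 0 → x = 0) {v w : Matrix n k R} (h : vᴴ * v = wᴴ * w) :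
    ∃ U : Matrix n n R, Uᴴ * U = 1 ∧ U * v = w := by
  have hgram (i j : k) : star (vᵀ i) ⬝ᵥ vᵀ j = star (wᵀ i) ⬝ᵥ wᵀ j := congrFun (congrFun h i) j
  suffices ∀ s : Finset k, ∃ U : Matrix n n R, Uᴴ * U = 1 ∧ ∀ j ∈ s, U *ᵥ vᵀ j = wᵀ j by
    obtain ⟨U, hU, hUv⟩ := this Finset.univ
    refine ⟨U, hU, ext fun i j => ?_⟩
    simpa [mulVec, dotProduct, mul_apply] using congrFun (hUv j (Finset.mem_univ j)) i
  intro s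
  classical
  induction s using Finset.induction_on with
  | empty => exact ⟨1, by simp, by simp⟩
  | insert j s _ ih =>
    obtain ⟨U, hU, hUs⟩ := ih
    have hinner (i : k) (hi : i ∈ s) : star (U *ᵥ vᵀ j) ⬝ᵥ wᵀ i = star (wᵀ j) ⬝ᵥ wᵀ i := by
      conv_lhs => rw [← hUs i hi, star_mulVec_dotProduct_mulVec hU, hgram]
    obtain ⟨H, hH, hHj, hHfix⟩ :=
      exists_unitary_mulVec_eq hR (b := wᵀ j) (by rw [star_mulVec_dotProduct_mulVec hU, hgram])
    refine ⟨H * U, ?_, ?_⟩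
    · rw [conjTranspose_mul, Matrix.mul_assoc, ← Matrix.mul_assoc Hᴴ, hH, Matrix.one_mul, hU]
    · simp only [Finset.mem_insert, forall_eq_or_imp]
      refine ⟨by rw [← mulVec_mulVec, hHj], fun i hi => ?_⟩
      rw [← mulVec_mulVec, hUs i hi]
      exact hHfix _ (by rw [star_sub, sub_dotProduct, hinner i hi, sub_self])

end DivisionRing

end Matrix

theorem Quaternion.eq_zero_of_star_dotProduct_self_eq_zero {n : Type*} [Fintype n]
    (x : n → Quaternion ℝ) (hx : star x ⬝ᵥ x = 0) : x = 0 := by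
  have hre : ∑ i, Quaternion.normSq (x i) = 0 := by
    have h : algebraMap ℝ (Quaternion ℝ) (∑ i, Quaternion.normSq (x i)) = 0 := by
      simpa [map_sum, dotProduct, Quaternion.star_mul_self] using hx
    exact (map_eq_zero_iff _ (algebraMap ℝ (Quaternion ℝ)).injective).mp h
  funext i
  exact Quaternion.normSq_eq_zero.mp
    ((Finset.sum_eq_zero_iff_of_nonneg fun i _ => Quaternion.normSq_nonneg).mp hre i
      (Finset.mem_univ i))

theorem stmt8_general (n : ℕ) (v w : MatH n) :
    (∃ B₁ ∈ SpH 2, ∃ B₂ ∈ SpH n, w = B₂ * v * B₁ᴴ) ↔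
      ∃ B ∈ SpH 2, wᴴ * w = B * (vᴴ * v) * Bᴴ := by
  constructor
  · rintro ⟨B₁, hB₁, B₂, hB₂, rfl⟩
    have hB₂' : B₂ᴴ * B₂ = 1 := hB₂
    refine ⟨B₁, hB₁, ?_⟩
    simp only [conjTranspose_mul, conjTranspose_conjTranspose, Matrix.mul_assoc]
    rw [← Matrix.mul_assoc B₂ᴴ, hB₂', Matrix.one_mul]
  · rintro ⟨B, hB, hgram⟩
    obtain ⟨U, hU, hUv⟩ := exists_unitary_mul_eq_of_conjTranspose_mul_self_eq
      Quaternion.eq_zero_of_star_dotProduct_self_eq_zero (v := v * Bᴴ) (w := w)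
      (by simp only [hgram, conjTranspose_mul, conjTranspose_conjTranspose, Matrix.mul_assoc])
    exact ⟨B, hB, U, hU, by rw [← hUv, Matrix.mul_assoc]⟩

/-- Proposition 4.1(c): two unit vectors of `m` are congruent under the isotropy action of
`Sp(2) × Sp(n)` if and only if `vᴴv` and `ṽᴴṽ` are `Sp(2)`-conjugate (equivalently, iff the
two vectors have the same characteristic angle). -/
theorem stmt8 (n : ℕ) (hn : 2 ≤ n) (v w : MatH n)
    (hv : hnorm v = 1) (hw : hnorm w = 1) :
    (∃ B₁ ∈ SpH 2, ∃ B₂ ∈ SpH n, w = B₂ * v * B₁ᴴ) ↔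
      ∃ B ∈ SpH 2, wᴴ * w = B * (vᴴ * v) * Bᴴ :=
  stmt8_general n v w
end

section
/- Let v ∈ Matrix (Fin n) (Fin 2) ℍ satisfy vᴴ·v = (1/2)·1, and put X := fromBlocks 0 (−vᴴ) v 0 ∈ Matrix ((Fin 2) ⊕ (Fin n)) ((Fin 2) ⊕ (Fin n)) ℍ. Then X^(2ν) = (−1/2)^ν · fromBlocks 1 0 0 (2·v·vᴴ) for every natural number ν ≥ 1, X^(2ν+1) = (−1/2)^ν · X for every natural number ν ≥ 0, and for every t ∈ ℝ the exponential (in the real Banach algebra of (2+n)×(2+n) quaternionic matrices) satisfies exp(t·X) = 1 + (cos(t/√2) − 1) · fromBlocks 1 0 0 (2·v·vᴴ) + (√2·sin(t/√2)) · X. -/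
/-!
With `P := fromBlocks 1 0 0 (2 v vᴴ)`, the relation `vᴴ v = ½` makes `P` idempotent with
`P X = X` and `X² = -½ P`. Hence `X` acts like `i/√2` on the range of `P` and like `0` on its
complement, and the exponential series splits into the cosine series times `P` (plus the
correction `1 - P` from the constant term) and the sine series times `X`.
-/

open Matrix

noncomputable section

section Powers

variable {R A : Type*} [CommSemiring R] [Semiring A] [Algebra R A] {c : R} {X P : A}

theorem pow_mul_eq_self_of_mul_eq_self (hPX : P * X = X) (k : ℕ) : P ^ k * X = X := by
  induction k with
  | zero => rw [pow_zero, one_mul]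
  | succ k ih => rw [pow_succ, mul_assoc, hPX, ih]

theorem pow_two_mul_of_mul_self_eq_smul (hX : X * X = c • P) (hP : IsIdempotentElem P)
    {k : ℕ} (hk : k ≠ 0) : X ^ (2 * k) = c ^ k • P := by
  obtain ⟨k, rfl⟩ := Nat.exists_eq_succ_of_ne_zero hk
  rw [pow_mul, sq, hX, smul_pow, hP.pow_succ_eq]

theorem pow_two_mul_add_one_of_mul_self_eq_smul (hX : X * X = c • P) (hPX : P * X = X)
    (k : ℕ) : X ^ (2 * k + 1) = c ^ k • X := by
  rw [pow_succ, pow_mul, sq, hX, smul_pow, smul_mul_assoc, pow_mul_eq_self_of_mul_eq_self hPX]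

end Powers

section Exponential

open NormedSpace Real

variable {A : Type*} [Ring A] [Algebra ℝ A] [TopologicalSpace A] [ContinuousSMul ℝ A]
  {ω : ℝ} {X P : A}

theorem hasSum_expSeries_even_of_mul_self_eq_neg_sq_smul [ContinuousAdd A]
    (hX : X * X = -(ω ^ 2) • P) (hP : IsIdempotentElem P) (t : ℝ) :
    HasSum (fun k : ℕ => ((2 * k).factorial : ℝ)⁻¹ • (t • X) ^ (2 * k))
      (1 + (cos (ω * t) - 1) • P) := by
  have hcos := ((hasSum_cos (ω * t)).smul_const P).add (hasSum_ite_eq 0 (1 - P))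
  rw [sub_smul, one_smul, add_sub_assoc', add_comm (1 : A), add_sub_assoc]
  convert hcos using 2 with k
  rcases Nat.eq_zero_or_pos k with rfl | hk
  · simp
  · rw [if_neg hk.ne', add_zero, smul_pow, pow_two_mul_of_mul_self_eq_smul hX hP hk.ne',
      smul_smul, smul_smul]
    congr 1
    rw [neg_pow, mul_pow, pow_mul ω]
    ring

theorem hasSum_expSeries_odd_of_mul_self_eq_neg_sq_smul (hω : ω ≠ 0)
    (hX : X * X = -(ω ^ 2) • P) (hPX : P * X = X) (t : ℝ) :
    HasSum (fun k : ℕ => ((2 * k + 1).factorial : ℝ)⁻¹ • (t • X) ^ (2 * k + 1))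
      ((ω⁻¹ * sin (ω * t)) • X) := by
  convert ((hasSum_sin (ω * t)).mul_left ω⁻¹).smul_const X using 2 with k
  rw [smul_pow, pow_two_mul_add_one_of_mul_self_eq_smul hX hPX, smul_smul, smul_smul]
  congr 1
  rw [neg_pow, mul_pow, pow_succ ω (2 * k), pow_mul ω]
  field_simp

theorem exp_smul_of_mul_self_eq_neg_sq_smul [IsTopologicalRing A] [T2Space A] (hω : ω ≠ 0)
    (hX : X * X = -(ω ^ 2) • P) (hP : IsIdempotentElem P) (hPX : P * X = X) (t : ℝ) :
    exp (t • X) = 1 + (cos (ω * t) - 1) • P + (ω⁻¹ * sin (ω * t)) • X := by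
  rw [exp_eq_tsum ℝ]
  exact (HasSum.even_add_odd (f := fun n => (n.factorial : ℝ)⁻¹ • (t • X) ^ n)
    (hasSum_expSeries_even_of_mul_self_eq_neg_sq_smul hX hP t)
    (hasSum_expSeries_odd_of_mul_self_eq_neg_sq_smul hω hX hPX t)).tsum_eq

end Exponential

section Blocks

variable {n : ℕ} {v : MatH n}

theorem two_smul_mul_conjTranspose_mul_self (hv : vᴴ * v = ((1 : ℝ) / 2) • 1) :
    ((2 : ℝ) • (v * vᴴ)) * v = v := by
  rw [Matrix.smul_mul, Matrix.mul_assoc, hv, Matrix.mul_smul, Matrix.mul_one, smul_smul]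
  norm_num

theorem isIdempotentElem_two_smul_mul_conjTranspose (hv : vᴴ * v = ((1 : ℝ) / 2) • 1) :
    IsIdempotentElem ((2 : ℝ) • (v * vᴴ)) := by
  rw [IsIdempotentElem, Matrix.mul_smul, ← Matrix.mul_assoc,
    two_smul_mul_conjTranspose_mul_self hv]

theorem isIdempotentElem_fromBlocks_one (hv : vᴴ * v = ((1 : ℝ) / 2) • 1) :
    IsIdempotentElem
      (fromBlocks (1 : Matrix (Fin 2) (Fin 2) ℍq) 0 0 ((2 : ℝ) • (v * vᴴ))) := by
  rw [IsIdempotentElem, fromBlocks_multiply, (isIdempotentElem_two_smul_mul_conjTranspose hv).eq]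
  simp

theorem fromBlocks_one_mul_iotaBlk (hv : vᴴ * v = ((1 : ℝ) / 2) • 1) :
    fromBlocks 1 0 0 ((2 : ℝ) • (v * vᴴ)) * iotaBlk v = iotaBlk v := by
  rw [iotaBlk, fromBlocks_multiply, two_smul_mul_conjTranspose_mul_self hv]
  simp

theorem iotaBlk_mul_self (hv : vᴴ * v = ((1 : ℝ) / 2) • 1) :
    iotaBlk v * iotaBlk v = -(1 / 2 : ℝ) • fromBlocks 1 0 0 ((2 : ℝ) • (v * vᴴ)) := by
  rw [iotaBlk, fromBlocks_multiply, fromBlocks_smul, smul_smul]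
  simp [hv]

end Blocks

theorem stmt9_general (n : ℕ) (v : MatH n)
    (hv : vᴴ * v = ((1 : ℝ) / 2) • 1) :
    (∀ ν : ℕ, 1 ≤ ν →
      iotaBlk v ^ (2 * ν) =
        (-(1 / 2 : ℝ)) ^ ν • Matrix.fromBlocks 1 0 0 ((2 : ℝ) • (v * vᴴ))) ∧
    (∀ ν : ℕ,
      iotaBlk v ^ (2 * ν + 1) = (-(1 / 2 : ℝ)) ^ ν • iotaBlk v) ∧
    (∀ t : ℝ,
      NormedSpace.exp (t • iotaBlk v) =
        1 + (Real.cos (t / Real.sqrt 2) - 1) • Matrix.fromBlocks 1 0 0 ((2 : ℝ) • (v * vᴴ))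
          + (Real.sqrt 2 * Real.sin (t / Real.sqrt 2)) • iotaBlk v) := by
  have hX := iotaBlk_mul_self hv
  have hP := isIdempotentElem_fromBlocks_one hv
  have hPX := fromBlocks_one_mul_iotaBlk hv
  refine ⟨fun ν hν => pow_two_mul_of_mul_self_eq_smul hX hP (by omega),
    pow_two_mul_add_one_of_mul_self_eq_smul hX hPX, fun t => ?_⟩
  have hω : (Real.sqrt 2)⁻¹ ^ 2 = 1 / 2 := by
    rw [inv_pow, Real.sq_sqrt zero_le_two, one_div]
  rw [← hω] at hX
  rw [exp_smul_of_mul_self_eq_neg_sq_smul (by positivity) hX hP hPX t, inv_inv, inv_mul_eq_div]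

/-- Powers and exponential of `X = ι(v)` for a direction `v` of characteristic angle `π/4`
(i.e. `vᴴv = (1/2)·1`); this computes the geodesics of `G₂(ℍ^{n+2})` in such directions. -/
theorem stmt9 (n : ℕ) (hn : 2 ≤ n) (v : MatH n)
    (hv : vᴴ * v = ((1 : ℝ) / 2) • 1) :
    (∀ ν : ℕ, 1 ≤ ν →
      iotaBlk v ^ (2 * ν) =
        (-(1 / 2 : ℝ)) ^ ν • Matrix.fromBlocks 1 0 0 ((2 : ℝ) • (v * vᴴ))) ∧
    (∀ ν : ℕ,
      iotaBlk v ^ (2 * ν + 1) = (-(1 / 2 : ℝ)) ^ ν • iotaBlk v) ∧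
    (∀ t : ℝ,
      NormedSpace.exp (t • iotaBlk v) =
        1 + (Real.cos (t / Real.sqrt 2) - 1) • Matrix.fromBlocks 1 0 0 ((2 : ℝ) • (v * vᴴ))
          + (Real.sqrt 2 * Real.sin (t / Real.sqrt 2)) • iotaBlk v) :=
  stmt9_general n v hv

end
end

section
/- Let v ∈ Matrix (Fin n) (Fin 2) ℍ satisfy vᴴ·v = (1/2)·1, put X := fromBlocks 0 (−vᴴ) v 0, let V₀ := {x : ((Fin 2) ⊕ (Fin n)) → ℍ such that x vanishes on all coordinates of the Fin n summand}, and for t ∈ ℝ let T_t be the left-ℍ-linear map x ↦ x·exp(t·X) (row vector times matrix). Then for every t ∈ ℝ: T_t(V₀) = V₀ holds if and only if t ∈ √2·π·ℤ, and if t ∉ √2·π·ℤ then T_t(V₀) ∩ V₀ = {0}. (Geometrically: for a geodesic γ_v of G₂(ℍ^{n+2}) starting at V' in a direction of characteristic angle π/4, at each time either γ_v(t) = V' or γ_v(t) ∩ V' = {0}.) -/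
open Matrix

noncomputable section

/-- The subspace `V' ⊆ ℍ^{n+2}` of row vectors supported on the first two coordinates. -/
def Vzero (n : ℕ) : Set ((Fin 2 ⊕ Fin n) → ℍq) :=
  {x | ∀ i : Fin n, x (Sum.inr i) = 0}

/-!
With `s = t / √2`, the matrix `Y = √2 • iotaBlk v` satisfies `Y³ = -Y` because `vᴴ v = 1/2`, so the
exponential series collapses to Rodrigues' formula `exp (s • Y) = 1 + sin s • Y + (1 - cos s) • Y²`.
In block form, `exp (t • iotaBlk v)` sends a row vector `(y, 0) ∈ V'` to
`(cos s • y, -(√2 sin s) • y vᴴ)`, and `y ↦ y vᴴ` is injective since `(y vᴴ) v = y / 2`.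
So if `sin s ≠ 0` only `0` stays in `V'`, while if `sin s = 0` then `cos s = ±1` and `V'` is
mapped onto itself.
-/

section ExpOfCubeEqNeg

open NormedSpace
open scoped Nat

variable {A : Type*} [Ring A] [Algebra ℝ A] {Y : A}

lemma pow_two_mul_add_one_of_pow_three_eq_neg (hY : Y ^ 3 = -Y) (k : ℕ) :
    Y ^ (2 * k + 1) = ((-1 : ℝ) ^ k) • Y := by
  induction k with
  | zero => simp
  | succ k ih =>
    rw [show 2 * (k + 1) + 1 = 2 + (2 * k + 1) by ring, pow_add, ih, mul_smul_comm,
      ← pow_succ, hY, pow_succ, mul_neg_one, neg_smul, smul_neg]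

lemma pow_two_mul_add_two_of_pow_three_eq_neg (hY : Y ^ 3 = -Y) (k : ℕ) :
    Y ^ (2 * k + 2) = ((-1 : ℝ) ^ k) • Y ^ 2 := by
  rw [pow_succ, pow_two_mul_add_one_of_pow_three_eq_neg hY, smul_mul_assoc, ← pow_two]

variable [TopologicalSpace A] [ContinuousSMul ℝ A]

lemma hasSum_exp_odd_terms_of_pow_three_eq_neg (hY : Y ^ 3 = -Y) (s : ℝ) :
    HasSum (fun k : ℕ => ((2 * k + 1)! : ℝ)⁻¹ • (s • Y) ^ (2 * k + 1)) (Real.sin s • Y) := by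
  convert (Real.hasSum_sin s).smul_const Y using 2 with k
  rw [smul_pow, pow_two_mul_add_one_of_pow_three_eq_neg hY, smul_smul, smul_smul]
  congr 1
  field_simp

lemma hasSum_exp_even_terms_of_pow_three_eq_neg [IsTopologicalAddGroup A] (hY : Y ^ 3 = -Y)
    (s : ℝ) :
    HasSum (fun k : ℕ => ((2 * k)! : ℝ)⁻¹ • (s • Y) ^ (2 * k))
      (1 + (1 - Real.cos s) • Y ^ 2) := by
  have hcos := (hasSum_nat_add_iff' 1).mpr (Real.hasSum_cos s)
  have htail : HasSum (fun k : ℕ => ((2 * (k + 1))! : ℝ)⁻¹ • (s • Y) ^ (2 * (k + 1)))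
      ((1 - Real.cos s) • Y ^ 2) := by
    convert (hcos.neg.smul_const (Y ^ 2)) using 2 with k
    · rw [smul_pow, mul_add, pow_two_mul_add_two_of_pow_three_eq_neg hY, smul_smul, smul_smul]
      congr 1
      simp only [pow_succ]
      field_simp
    · simp
  simpa [add_comm] using
    (hasSum_nat_add_iff (f := fun k : ℕ => ((2 * k)! : ℝ)⁻¹ • (s • Y) ^ (2 * k)) 1).mp htail

/-- Rodrigues' rotation formula. -/
lemma exp_smul_of_pow_three_eq_neg [IsTopologicalRing A] [T2Space A] (hY : Y ^ 3 = -Y)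
    (s : ℝ) :
    exp (s • Y) = 1 + Real.sin s • Y + (1 - Real.cos s) • Y ^ 2 := by
  have h := (hasSum_exp_even_terms_of_pow_three_eq_neg hY s).even_add_odd
    (f := fun k : ℕ => (k ! : ℝ)⁻¹ • (s • Y) ^ k) (hasSum_exp_odd_terms_of_pow_three_eq_neg hY s)
  rw [exp_eq_tsum ℝ]
  exact h.tsum_eq.trans (add_right_comm _ _ _)

end ExpOfCubeEqNeg

section Geodesic

open NormedSpace Real

variable {n : ℕ} {v : MatH n}

lemma iotaBlk_sq (v : MatH n) : iotaBlk v ^ 2 = fromBlocks (-(vᴴ * v)) 0 0 (-(v * vᴴ)) := by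
  simp [pow_two, iotaBlk, fromBlocks_multiply]

lemma iotaBlk_pow_three (hv : vᴴ * v = ((1 : ℝ) / 2) • 1) :
    iotaBlk v ^ 3 = (-(1 / 2 : ℝ)) • iotaBlk v := by
  rw [pow_succ, iotaBlk_sq, iotaBlk, fromBlocks_multiply, fromBlocks_smul]
  simp [Matrix.mul_assoc, hv, Matrix.mul_smul, Matrix.smul_mul]

lemma exp_smul_iotaBlk (hv : vᴴ * v = ((1 : ℝ) / 2) • 1) (t : ℝ) :
    exp (t • iotaBlk v) =
      fromBlocks (cos (t / sqrt 2) • 1) (-(sqrt 2 * sin (t / sqrt 2)) • vᴴ)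
        ((sqrt 2 * sin (t / sqrt 2)) • v) (1 - (2 * (1 - cos (t / sqrt 2))) • (v * vᴴ)) := by
  have hsqrt : sqrt 2 ^ 2 = 2 := sq_sqrt zero_le_two
  have hY : (sqrt 2 • iotaBlk v) ^ 3 = -(sqrt 2 • iotaBlk v) := by
    rw [smul_pow, iotaBlk_pow_three hv, smul_smul, pow_succ, hsqrt, ← neg_smul]
    congr 1
    ring
  rw [show t • iotaBlk v = (t / sqrt 2) • (sqrt 2 • iotaBlk v) by
    rw [smul_smul, div_mul_cancel₀ _ (by positivity)], exp_smul_of_pow_three_eq_neg hY,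
    smul_pow, iotaBlk_sq, hsqrt, hv, iotaBlk, ← fromBlocks_one]
  simp only [fromBlocks_smul, fromBlocks_add, smul_zero, add_zero, zero_add, smul_neg, smul_smul]
  congr 1 <;> module

lemma Vzero_eq_range : Vzero n = Set.range fun y : Fin 2 → ℍq => Sum.elim y 0 := by
  ext x
  refine ⟨fun hx => ⟨x ∘ Sum.inl, ?_⟩, ?_⟩
  · ext (i | i) : 1
    · rfl
    · exact (hx i).symm
  · rintro ⟨y, rfl⟩ i
    rfl

lemma sumElim_mem_Vzero_iff {y : Fin 2 → ℍq} {z : Fin n → ℍq} :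
    Sum.elim y z ∈ Vzero n ↔ z = 0 :=
  funext_iff.symm

lemma Vzero_ne_singleton_zero : Vzero n ≠ {0} := by
  intro h
  have : Sum.elim (1 : Fin 2 → ℍq) (0 : Fin n → ℍq) ∈ Vzero n := sumElim_mem_Vzero_iff.mpr rfl
  rw [h] at this
  simpa using congrFun this (Sum.inl 0)

lemma sumElim_zero_vecMul_fromBlocks {l m o p R : Type*} [Fintype m] [Fintype o]
    [NonUnitalNonAssocSemiring R] (y : m → R) (A : Matrix m l R) (B : Matrix m p R)
    (C : Matrix o l R) (D : Matrix o p R) :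
    Sum.elim y 0 ᵥ* fromBlocks A B C D = Sum.elim (y ᵥ* A) (y ᵥ* B) := by
  simp [vecMul_fromBlocks]

lemma image_vecMul_exp_smul_iotaBlk_Vzero (hv : vᴴ * v = ((1 : ℝ) / 2) • 1) (t : ℝ) :
    (fun x => x ᵥ* exp (t • iotaBlk v)) '' Vzero n =
      Set.range fun y : Fin 2 → ℍq =>
        Sum.elim (cos (t / sqrt 2) • y) (-(sqrt 2 * sin (t / sqrt 2)) • y ᵥ* vᴴ) := by
  rw [Vzero_eq_range, ← Set.range_comp, exp_smul_iotaBlk hv]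
  congr 1
  funext y
  simp [sumElim_zero_vecMul_fromBlocks, vecMul_smul, vecMul_neg]

lemma eq_zero_of_vecMul_eq_zero_of_mul_eq_smul_one {K R k m : Type*} [Field K] [Ring R]
    [Algebra K R] [NoZeroSMulDivisors K R] [Fintype k] [Fintype m] [DecidableEq k]
    {M : Matrix k m R} {N : Matrix m k R} {c : K} (hMN : M * N = c • 1) (hc : c ≠ 0)
    {y : k → R} (hy : y ᵥ* M = 0) : y = 0 := by
  have : c • y = 0 := by
    rw [← vecMul_one y, ← vecMul_smul, ← hMN, ← vecMul_vecMul, hy, zero_vecMul]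
  exact (smul_eq_zero.mp this).resolve_left hc

lemma image_vecMul_exp_smul_iotaBlk_Vzero_inter (hv : vᴴ * v = ((1 : ℝ) / 2) • 1) {t : ℝ}
    (hs : sin (t / sqrt 2) ≠ 0) :
    (fun x => x ᵥ* exp (t • iotaBlk v)) '' Vzero n ∩ Vzero n = {0} := by
  rw [image_vecMul_exp_smul_iotaBlk_Vzero hv, Set.eq_singleton_iff_unique_mem]
  refine ⟨⟨⟨0, by simp⟩, fun _ => rfl⟩, ?_⟩
  rintro _ ⟨⟨y, rfl⟩, hmem⟩
  rw [sumElim_mem_Vzero_iff, smul_eq_zero, neg_eq_zero] at hmem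
  have hy : y = 0 := eq_zero_of_vecMul_eq_zero_of_mul_eq_smul_one hv (by norm_num)
    (hmem.resolve_left (mul_ne_zero (by positivity) hs))
  simp [hy]

lemma image_vecMul_exp_smul_iotaBlk_Vzero_of_sin_eq_zero (hv : vᴴ * v = ((1 : ℝ) / 2) • 1)
    {t : ℝ} (hs : sin (t / sqrt 2) = 0) :
    (fun x => x ᵥ* exp (t • iotaBlk v)) '' Vzero n = Vzero n := by
  have hc : cos (t / sqrt 2) ≠ 0 := by
    intro hc
    simpa [hs, hc] using sin_sq_add_cos_sq (t / sqrt 2)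
  rw [image_vecMul_exp_smul_iotaBlk_Vzero hv, hs, Vzero_eq_range]
  simp only [mul_zero, neg_zero, zero_smul]
  have hsurj : Function.Surjective fun y : Fin 2 → ℍq => cos (t / sqrt 2) • y :=
    fun y => ⟨(cos (t / sqrt 2))⁻¹ • y, smul_inv_smul₀ hc y⟩
  exact hsurj.range_comp fun y => Sum.elim y (0 : Fin n → ℍq)

lemma exists_int_eq_sqrt_two_mul_pi_mul_iff (t : ℝ) :
    (∃ k : ℤ, t = sqrt 2 * π * k) ↔ sin (t / sqrt 2) = 0 := by
  rw [sin_eq_zero_iff]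
  refine exists_congr fun k => ?_
  rw [eq_div_iff (by positivity)]
  constructor <;> intro h <;> linarith

end Geodesic

theorem stmt10_general (n : ℕ) (v : MatH n)
    (hv : vᴴ * v = ((1 : ℝ) / 2) • 1) (t : ℝ) :
    (((fun x => Matrix.vecMul x (NormedSpace.exp (t • iotaBlk v))) '' Vzero n = Vzero n)
        ↔ ∃ k : ℤ, t = Real.sqrt 2 * Real.pi * k) ∧
    ((¬ ∃ k : ℤ, t = Real.sqrt 2 * Real.pi * k) →
      ((fun x => Matrix.vecMul x (NormedSpace.exp (t • iotaBlk v))) '' Vzero n)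
          ∩ Vzero n = {0}) := by
  rw [exists_int_eq_sqrt_two_mul_pi_mul_iff]
  refine ⟨⟨fun h => ?_, image_vecMul_exp_smul_iotaBlk_Vzero_of_sin_eq_zero hv⟩,
    image_vecMul_exp_smul_iotaBlk_Vzero_inter hv⟩
  by_contra hs
  have h0 := image_vecMul_exp_smul_iotaBlk_Vzero_inter hv hs
  rw [h, Set.inter_self] at h0
  exact Vzero_ne_singleton_zero h0

/-- Lemma 4.3: along a geodesic of `G₂(ℍ^{n+2})` starting at `V'` in a direction of
characteristic angle `π/4`, at each time `t` either `γ_v(t) = V'` (iff `t ∈ √2·π·ℤ`),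
or `γ_v(t) ∩ V' = {0}`. -/
theorem stmt10 (n : ℕ) (hn : 2 ≤ n) (v : MatH n)
    (hv : vᴴ * v = ((1 : ℝ) / 2) • 1) (t : ℝ) :
    (((fun x => Matrix.vecMul x (NormedSpace.exp (t • iotaBlk v))) '' Vzero n = Vzero n)
        ↔ ∃ k : ℤ, t = Real.sqrt 2 * Real.pi * k) ∧
    ((¬ ∃ k : ℤ, t = Real.sqrt 2 * Real.pi * k) →
      ((fun x => Matrix.vecMul x (NormedSpace.exp (t • iotaBlk v))) '' Vzero n)
          ∩ Vzero n = {0}) :=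
  stmt10_general n v hv t

end
end

section
/- Write L₊ := {v ∈ m : the second column of v is 0} and L₋ := {v ∈ m : the first column of v is 0}, and for v ∈ m let v₁, v₂ ∈ ℍⁿ denote its columns; for a,b ∈ ℍⁿ put ⟨a,b⟩ := Σᵢ conj(aᵢ)·bᵢ and Im(q) := (q − conj(q))/2 for q ∈ ℍ. Then for all w ∈ m with columns w₁, w₂: (i) for u, v ∈ L₊, the columns of R(u,v)w are (u₁·⟨v₁,w₁⟩ − v₁·⟨u₁,w₁⟩ + 2·w₁·Im⟨v₁,u₁⟩ , u₁·⟨v₁,w₂⟩ − v₁·⟨u₁,w₂⟩); (ii) for u ∈ L₊ and v ∈ L₋, the columns of R(u,v)w are (w₂·⟨v₂,u₁⟩ , −w₁·⟨u₁,v₂⟩); (iii) for u, v ∈ L₋, the columns of R(u,v)w are (u₂·⟨v₂,w₁⟩ − v₂·⟨u₂,w₁⟩ , u₂·⟨v₂,w₂⟩ − v₂·⟨u₂,w₂⟩ + 2·w₂·Im⟨v₂,u₂⟩). -/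
open Matrix

/-!
Since `(xᴴ y) a j = ⟨x_a, y_j⟩`, every entry of `R(u,v)w` is
`Σ_a (u_{ia} ⟨v_a, w_j⟩ - v_{ia} ⟨u_a, w_j⟩ + w_{ia} (⟨v_a, u_j⟩ - ⟨u_a, v_j⟩))`.
On `L₊` and `L₋` every term involving a vanishing column drops out, and the surviving
diagonal terms combine via `⟨u, v⟩ = conj ⟨v, u⟩` into `q - conj q = 2 Im q`.
-/

instance : NeZero (2 : ℍq) := ⟨fun h => two_ne_zero (congrArg QuaternionAlgebra.re h)⟩

theorem two_smul_mul_imPart (a q : ℍq) : (2 : ℝ) • (a * imPart q) = a * (q - star q) := by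
  rw [two_smul, ← mul_add, imPart, add_halves]

theorem vip_zero_left {n : ℕ} (b : Fin n → ℍq) : vip 0 b = 0 := by
  simp [vip]

theorem vip_zero_right {n : ℕ} (a : Fin n → ℍq) : vip a 0 = 0 := by
  simp [vip]

theorem star_vip {n : ℕ} (a b : Fin n → ℍq) : star (vip a b) = vip b a := by
  simp [vip, star_sum]

theorem col_eq_zero_iff {n : ℕ} (j : Fin 2) (v : MatH n) : col j v = 0 ↔ ∀ i, v i j = 0 :=
  funext_iff

theorem Rcurv_apply {n : ℕ} (u v w : MatH n) (i : Fin n) (j : Fin 2) :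
    Rcurv u v w i j = ∑ a, (u i a * vip (col a v) (col j w) - v i a * vip (col a u) (col j w) +
      w i a * vip (col a v) (col j u) - w i a * vip (col a u) (col j v)) := by
  rw [Rcurv, Matrix.sub_mul, Matrix.mul_assoc, Matrix.mul_assoc, Matrix.mul_sub, ← add_sub_assoc]
  simp only [Matrix.add_apply, Matrix.sub_apply, Matrix.mul_apply, Finset.sum_sub_distrib,
    Finset.sum_add_distrib]
  rfl

theorem stmt11_general (n : ℕ) (u v w : MatH n) :
    -- (i) u, v ∈ L₊
    ((∀ i, u i 1 = 0) → (∀ i, v i 1 = 0) → ∀ i : Fin n,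
      Rcurv u v w i 0 =
        u i 0 * vip (_root_.col 0 v) (_root_.col 0 w) - v i 0 * vip (_root_.col 0 u) (_root_.col 0 w)
          + (2 : ℝ) • (w i 0 * imPart (vip (_root_.col 0 v) (_root_.col 0 u))) ∧
      Rcurv u v w i 1 =
        u i 0 * vip (_root_.col 0 v) (_root_.col 1 w) - v i 0 * vip (_root_.col 0 u) (_root_.col 1 w)) ∧
    -- (ii) u ∈ L₊, v ∈ L₋
    ((∀ i, u i 1 = 0) → (∀ i, v i 0 = 0) → ∀ i : Fin n,
      Rcurv u v w i 0 = w i 1 * vip (_root_.col 1 v) (_root_.col 0 u) ∧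
      Rcurv u v w i 1 = -(w i 0 * vip (_root_.col 0 u) (_root_.col 1 v))) ∧
    -- (iii) u, v ∈ L₋
    ((∀ i, u i 0 = 0) → (∀ i, v i 0 = 0) → ∀ i : Fin n,
      Rcurv u v w i 0 =
        u i 1 * vip (_root_.col 1 v) (_root_.col 0 w) - v i 1 * vip (_root_.col 1 u) (_root_.col 0 w) ∧
      Rcurv u v w i 1 =
        u i 1 * vip (_root_.col 1 v) (_root_.col 1 w) - v i 1 * vip (_root_.col 1 u) (_root_.col 1 w)
          + (2 : ℝ) • (w i 1 * imPart (vip (_root_.col 1 v) (_root_.col 1 u)))) := by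
  refine ⟨fun hu hv i => ?_, fun hu hv i => ?_, fun hu hv i => ?_⟩ <;>
  · have hcu := (col_eq_zero_iff _ u).2 hu
    have hcv := (col_eq_zero_iff _ v).2 hv
    simp only [Rcurv_apply, Fin.sum_univ_two, two_smul_mul_imPart, star_vip, hu, hv, hcu, hcv,
      vip_zero_left, vip_zero_right]
    constructor <;> noncomm_ring

/-- The explicit columnwise description (Equations (10)–(12)) of the curvature tensor of
`G₂(ℍ^{n+2})` on the subspaces `L₊` (second column zero) and `L₋` (first column zero). -/
theorem stmt11 (n : ℕ) (hn : 2 ≤ n) (u v w : MatH n) :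
    -- (i) u, v ∈ L₊
    ((∀ i, u i 1 = 0) → (∀ i, v i 1 = 0) → ∀ i : Fin n,
      Rcurv u v w i 0 =
        u i 0 * vip (_root_.col 0 v) (_root_.col 0 w) - v i 0 * vip (_root_.col 0 u) (_root_.col 0 w)
          + (2 : ℝ) • (w i 0 * imPart (vip (_root_.col 0 v) (_root_.col 0 u))) ∧
      Rcurv u v w i 1 =
        u i 0 * vip (_root_.col 0 v) (_root_.col 1 w) - v i 0 * vip (_root_.col 0 u) (_root_.col 1 w)) ∧
    -- (ii) u ∈ L₊, v ∈ L₋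
    ((∀ i, u i 1 = 0) → (∀ i, v i 0 = 0) → ∀ i : Fin n,
      Rcurv u v w i 0 = w i 1 * vip (_root_.col 1 v) (_root_.col 0 u) ∧
      Rcurv u v w i 1 = -(w i 0 * vip (_root_.col 0 u) (_root_.col 1 v))) ∧
    -- (iii) u, v ∈ L₋
    ((∀ i, u i 0 = 0) → (∀ i, v i 0 = 0) → ∀ i : Fin n,
      Rcurv u v w i 0 =
        u i 1 * vip (_root_.col 1 v) (_root_.col 0 w) - v i 1 * vip (_root_.col 1 u) (_root_.col 0 w) ∧
      Rcurv u v w i 1 =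
        u i 1 * vip (_root_.col 1 v) (_root_.col 1 w) - v i 1 * vip (_root_.col 1 u) (_root_.col 1 w)
          + (2 : ℝ) • (w i 1 * imPart (vip (_root_.col 1 v) (_root_.col 1 u)))) :=
  stmt11_general n u v w
end
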